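/- arXiv:math/9811067 — 5 statements merged into one kernel-verified Lean document; each statement's English description precedes it below -/
import Mathlib

section
/- For every positive integer n there exists a bijection f from the set of noncrossing partitions of [n] = {1,...,n} onto the set of 132-avoiding permutations of [n] such that for every noncrossing partition x of [n] and every i with 1 ≤ i ≤ n-1, the index i is a descent of f(x) if and only if i+1 is the smallest element of the block of x that contains it. -/
/-- A permutation `p` of `[n]` (modelled on `Fin n`, 0-based) is 132-avoiding if there
are no positions `i < j < k` with `p i < p k < p j`. -/
def Avoids132 {n : ℕ} (p : Equiv.Perm (Fin n)) : Prop :=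
  ¬ ∃ i j k : Fin n, i < j ∧ j < k ∧ p i < p k ∧ p k < p j

/-- The descent set of `p`, in the 1-based convention of the paper: `i ∈ D(p)` iff
`1 ≤ i ≤ n-1` and `p_i > p_{i+1}`, where `p_i` denotes the `i`-th entry of `p` in
1-based indexing (so `p_i = p ⟨i-1⟩` in 0-based indexing). -/
def DescentSet {n : ℕ} (p : Equiv.Perm (Fin n)) : Finset ℕ :=
  (Finset.range n).filter (fun i => ∃ h : 1 ≤ i ∧ i < n, p ⟨i, h.2⟩ < p ⟨i - 1, by omega⟩)

/-- `P` is a partition of `[n]` (modelled on `Fin n`): its blocks are nonempty and every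
element lies in exactly one block. -/
def IsPartition {n : ℕ} (P : Finset (Finset (Fin n))) : Prop :=
  (∀ B ∈ P, B.Nonempty) ∧ ∀ i : Fin n, ∃! B, B ∈ P ∧ i ∈ B

/-- A partition of `[n]` is noncrossing if there are no elements `a < b < c < d` with
`a, c` in one block and `b, d` in a different block. -/
def IsNoncrossing {n : ℕ} (P : Finset (Finset (Fin n))) : Prop :=
  ¬ ∃ a b c d : Fin n, a < b ∧ b < c ∧ c < d ∧
    ∃ B₁ ∈ P, ∃ B₂ ∈ P, B₁ ≠ B₂ ∧ a ∈ B₁ ∧ c ∈ B₁ ∧ b ∈ B₂ ∧ d ∈ B₂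

/-!
Encode a partition by the map `g` sending each element to the least element of its block. The
partition is noncrossing exactly when `g` is nested: `i < j` and `g j ≤ i` force `g j ≤ g i`.
Ranking the elements by decreasing block minimum, ties broken by increasing position, gives a
permutation `p`, and nestedness of `g` is what makes `p` avoid 132. Conversely `g k` is recovered
from `p` as the leftmost position `m ≤ k` with `p m ≤ p k`, which for a 132-avoiding `p` is
again a nested map. As ties are broken by position, `p k < p (k-1)` iff `g (k-1) < g k`, and
nestedness turns this into `g k = k`: the descents of `p` mark the elements that open a block.
-/

open Finset Function

namespace Tuple

variable {n : ℕ} {α : Type*} [LinearOrder α] {f : Fin n → α}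

theorem sort_symm_lt_sort_symm_iff (hf : Injective f) {a b : Fin n} :
    (sort f).symm a < (sort f).symm b ↔ f a < f b := by
  have hmono : StrictMono (f ∘ sort f) :=
    (monotone_sort f).strictMono_of_injective (hf.comp (sort f).injective)
  simpa using (hmono.lt_iff_lt (a := (sort f).symm a) (b := (sort f).symm b)).symm

theorem sort_symm_eq_of_lt_imp (hf : Injective f) {σ : Equiv.Perm (Fin n)}
    (h : ∀ a b, f a < f b → σ a < σ b) : (sort f).symm = σ := by
  suffices σ.symm = sort f by rw [← this, Equiv.symm_symm]
  refine eq_sort_iff.2 ⟨fun a b hab => ?_, fun a b hab heq => ?_⟩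
  · by_contra hlt
    have hba := h _ _ (not_le.mp hlt)
    rw [Equiv.apply_symm_apply, Equiv.apply_symm_apply] at hba
    exact hba.not_ge hab
  · exact absurd (σ.symm.injective (hf heq)) hab.ne

end Tuple

theorem mem_descentSet_iff {n : ℕ} (p : Equiv.Perm (Fin n)) {i : ℕ} (h1 : 1 ≤ i) (h2 : i < n) :
    i ∈ DescentSet p ↔ p ⟨i, h2⟩ < p ⟨i - 1, by omega⟩ := by
  simp [DescentSet, h1, h2]

namespace Noncrossing

variable {n : ℕ}

structure IsBlockMinMap (g : Fin n → Fin n) : Prop where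
  apply_le : ∀ k, g k ≤ k
  nested : ∀ ⦃i j⦄, i < j → g j ≤ i → g j ≤ g i

namespace IsBlockMinMap

variable {g : Fin n → Fin n}

theorem apply_apply (hg : IsBlockMinMap g) (k : Fin n) : g (g k) = g k := by
  rcases (hg.apply_le k).lt_or_eq with hlt | heq
  · exact le_antisymm (hg.apply_le _) (hg.nested hlt le_rfl)
  · rw [heq, heq]

theorem apply_lt_apply_iff (hg : IsBlockMinMap g) {j k : Fin n} (hjk : j.val + 1 = k.val) :
    g j < g k ↔ g k = k := by
  refine ⟨fun hlt => ?_, fun hk =>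
    ((hg.apply_le j).trans_lt (Fin.lt_def.mpr (by omega))).trans_eq hk.symm⟩
  by_contra hne
  have hkj : g k ≤ j := Fin.le_def.mpr (by have := (hg.apply_le k).lt_of_ne hne; omega)
  exact (hg.nested (Fin.lt_def.mpr (by omega)) hkj).not_gt hlt

end IsBlockMinMap

def blockKey (g : Fin n → Fin n) (k : Fin n) : (Fin n)ᵒᵈ ×ₗ Fin n :=
  toLex (OrderDual.toDual (g k), k)

theorem blockKey_injective (g : Fin n → Fin n) : Injective (blockKey g) :=
  fun _ _ h => congrArg (fun x => (ofLex x).2) h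

theorem blockKey_lt_blockKey_iff {g : Fin n → Fin n} {a b : Fin n} :
    blockKey g a < blockKey g b ↔ g b < g a ∨ g a = g b ∧ a < b := by
  simp [blockKey, Prod.Lex.toLex_lt_toLex]

def permOfBlockMin (g : Fin n → Fin n) : Equiv.Perm (Fin n) :=
  (Tuple.sort (blockKey g)).symm

theorem permOfBlockMin_lt_iff {g : Fin n → Fin n} {a b : Fin n} :
    permOfBlockMin g a < permOfBlockMin g b ↔ g b < g a ∨ g a = g b ∧ a < b :=
  (Tuple.sort_symm_lt_sort_symm_iff (blockKey_injective g)).trans blockKey_lt_blockKey_iff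

theorem permOfBlockMin_le_iff {g : Fin n → Fin n} {a b : Fin n} :
    permOfBlockMin g a ≤ permOfBlockMin g b ↔ g b < g a ∨ g a = g b ∧ a ≤ b := by
  have : permOfBlockMin g a ≤ permOfBlockMin g b ↔ blockKey g a ≤ blockKey g b := by
    simpa only [permOfBlockMin, not_lt] using
      (Tuple.sort_symm_lt_sort_symm_iff (blockKey_injective g)).not
  simp [this, blockKey, Prod.Lex.toLex_le_toLex]

theorem avoids132_permOfBlockMin {g : Fin n → Fin n} (hg : IsBlockMinMap g) :
    Avoids132 (permOfBlockMin g) := by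
  rintro ⟨i, j, k, hij, hjk, hik, hkj⟩
  rw [permOfBlockMin_lt_iff] at hik hkj
  have hgjk : g j < g k := hkj.resolve_right fun h => h.2.not_gt hjk
  have hgki : g k ≤ g i := by
    rcases hik with h | ⟨h, -⟩
    exacts [h.le, h.ge]
  exact (hg.nested hjk ((hgki.trans (hg.apply_le i)).trans hij.le)).not_gt hgjk

section Leftmost

variable {α : Type*} [LinearOrder α] (p : Fin n → α)

def leftmostLE (k : Fin n) : Fin n :=
  ({m | m ≤ k ∧ p m ≤ p k} : Finset (Fin n)).min' ⟨k, by simp⟩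

theorem leftmostLE_spec (k : Fin n) : leftmostLE p k ≤ k ∧ p (leftmostLE p k) ≤ p k := by
  unfold leftmostLE
  simpa using min'_mem ({m | m ≤ k ∧ p m ≤ p k} : Finset (Fin n)) ⟨k, by simp⟩

theorem leftmostLE_le (k : Fin n) : leftmostLE p k ≤ k := (leftmostLE_spec p k).1

theorem apply_leftmostLE_le (k : Fin n) : p (leftmostLE p k) ≤ p k := (leftmostLE_spec p k).2

variable {p}

theorem leftmostLE_le_of {k m : Fin n} (hm : m ≤ k) (hpm : p m ≤ p k) : leftmostLE p k ≤ m :=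
  min'_le _ _ (by simp [hm, hpm])

theorem lt_apply_of_lt_leftmostLE {k m : Fin n} (hm : m < leftmostLE p k) : p k < p m :=
  not_le.mp fun hpm => (leftmostLE_le_of (hm.le.trans (leftmostLE_le p k)) hpm).not_gt hm

end Leftmost

theorem isBlockMinMap_leftmostLE {p : Equiv.Perm (Fin n)} (hp : Avoids132 p) :
    IsBlockMinMap (leftmostLE p) := by
  refine ⟨leftmostLE_le p, fun i j hij hle => ?_⟩
  by_contra hlt
  push Not at hlt
  have hi : p (leftmostLE p i) < p i :=
    (apply_leftmostLE_le p i).lt_of_ne (p.injective.ne (hlt.trans_le hle).ne)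
  have hj : p j < p (leftmostLE p i) := lt_apply_of_lt_leftmostLE hlt
  rcases hle.lt_or_eq with hlti | heq
  · have hmj : p (leftmostLE p j) < p j :=
      (apply_leftmostLE_le p j).lt_of_ne (p.injective.ne (hlti.trans hij).ne)
    exact hp ⟨_, i, j, hlti, hij, hmj, hj.trans hi⟩
  · have := apply_leftmostLE_le p j
    rw [heq] at this
    exact (this.trans_lt (hj.trans hi)).false

theorem leftmostLE_permOfBlockMin {g : Fin n → Fin n} (hg : IsBlockMinMap g) :
    leftmostLE (permOfBlockMin g) = g := by
  funext k
  refine le_antisymm (leftmostLE_le_of (hg.apply_le k) ?_) ?_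
  · exact permOfBlockMin_le_iff.2 (Or.inr ⟨hg.apply_apply k, hg.apply_le k⟩)
  · have hgk : g k ≤ g (leftmostLE (permOfBlockMin g) k) := by
      rcases permOfBlockMin_le_iff.1 (apply_leftmostLE_le (permOfBlockMin g) k) with h | ⟨h, -⟩
      exacts [h.le, h.ge]
    exact hgk.trans (hg.apply_le _)

theorem permOfBlockMin_leftmostLE {p : Equiv.Perm (Fin n)} (hp : Avoids132 p) :
    permOfBlockMin (leftmostLE p) = p := by
  refine Tuple.sort_symm_eq_of_lt_imp (blockKey_injective _) fun a b hkey => ?_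
  rcases blockKey_lt_blockKey_iff.1 hkey with hlt | ⟨heq, hab⟩
  · exact (lt_apply_of_lt_leftmostLE hlt).trans_le (apply_leftmostLE_le p b)
  by_contra hba
  have hba : p b < p a := (not_lt.mp hba).lt_of_ne (p.injective.ne hab.ne')
  have hb : p (leftmostLE p a) ≤ p b := heq ▸ apply_leftmostLE_le p b
  rcases (leftmostLE_le p a).lt_or_eq with hlta | heqa
  · refine hp ⟨_, a, b, hlta, hab, hb.lt_of_ne (p.injective.ne ?_), hba⟩
    exact (hlta.trans hab).ne
  · rw [heqa] at hb
    exact (hb.trans_lt hba).false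

def blockMinMapEquivAvoids132 :
    {g : Fin n → Fin n // IsBlockMinMap g} ≃ {p : Equiv.Perm (Fin n) // Avoids132 p} where
  toFun g := ⟨permOfBlockMin g, avoids132_permOfBlockMin g.2⟩
  invFun p := ⟨leftmostLE ⇑p.1, isBlockMinMap_leftmostLE p.2⟩
  left_inv g := Subtype.ext (leftmostLE_permOfBlockMin g.2)
  right_inv p := Subtype.ext (permOfBlockMin_leftmostLE p.2)

theorem permOfBlockMin_descent_iff {g : Fin n → Fin n} (hg : IsBlockMinMap g) {j k : Fin n}
    (hjk : j.val + 1 = k.val) : permOfBlockMin g k < permOfBlockMin g j ↔ g k = k := by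
  rw [permOfBlockMin_lt_iff, or_iff_left fun h => h.2.not_gt (Fin.lt_def.mpr (by omega))]
  exact hg.apply_lt_apply_iff hjk

section Partition

variable {P : Finset (Finset (Fin n))} (hP : IsPartition P)

def blockOf (k : Fin n) : Finset (Fin n) :=
  P.choose (k ∈ ·) (hP.2 k)

theorem blockOf_mem (k : Fin n) : blockOf hP k ∈ P :=
  choose_mem _ _ _

theorem mem_blockOf (k : Fin n) : k ∈ blockOf hP k :=
  choose_property (k ∈ ·) P (hP.2 k)

theorem eq_blockOf {B : Finset (Fin n)} {k : Fin n} (hB : B ∈ P) (hk : k ∈ B) :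
    B = blockOf hP k :=
  (hP.2 k).unique ⟨hB, hk⟩ ⟨blockOf_mem hP k, mem_blockOf hP k⟩

variable {hP}

theorem blockOf_eq_blockOf_iff {j k : Fin n} : blockOf hP j = blockOf hP k ↔ j ∈ blockOf hP k :=
  ⟨fun h => h ▸ mem_blockOf hP j, fun h => (eq_blockOf hP (blockOf_mem hP k) h).symm⟩

variable (hP)

def blockMin (k : Fin n) : Fin n :=
  (blockOf hP k).min' ⟨k, mem_blockOf hP k⟩

theorem blockMin_mem (k : Fin n) : blockMin hP k ∈ blockOf hP k :=
  min'_mem _ _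

variable {hP}

theorem blockMin_le_of_mem {j k : Fin n} (hj : j ∈ blockOf hP k) : blockMin hP k ≤ j :=
  min'_le _ _ hj

theorem blockMin_eq_of {k m : Fin n} (hm : m ∈ blockOf hP k) (hle : ∀ j ∈ blockOf hP k, m ≤ j) :
    blockMin hP k = m :=
  le_antisymm (blockMin_le_of_mem hm) (hle _ (blockMin_mem hP k))

theorem blockMin_eq_blockMin_iff {j k : Fin n} :
    blockMin hP j = blockMin hP k ↔ blockOf hP j = blockOf hP k := by
  refine ⟨fun h => ?_, fun h => by unfold blockMin; congr 1⟩
  rw [eq_blockOf hP (blockOf_mem hP j) (blockMin_mem hP j), h,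
    ← eq_blockOf hP (blockOf_mem hP k) (blockMin_mem hP k)]

theorem blockMin_eq_self_iff {k : Fin n} :
    blockMin hP k = k ↔ ∀ B ∈ P, k ∈ B → ∀ j ∈ B, k ≤ j := by
  refine ⟨fun hk B hB hkB j hj => ?_, fun h => blockMin_eq_of (mem_blockOf hP k)
    (h _ (blockOf_mem hP k) (mem_blockOf hP k))⟩
  rw [eq_blockOf hP hB hkB] at hj
  exact hk ▸ blockMin_le_of_mem hj

theorem isBlockMinMap_blockMin (hNC : IsNoncrossing P) : IsBlockMinMap (blockMin hP) := by
  refine ⟨fun k => blockMin_le_of_mem (mem_blockOf hP k), fun i j hij hle => ?_⟩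
  by_contra hlt
  push Not at hlt
  have hne : blockOf hP i ≠ blockOf hP j := fun h => hlt.ne (blockMin_eq_blockMin_iff.2 h)
  have hlti : blockMin hP j < i := hle.lt_of_ne fun h =>
    hne (blockOf_eq_blockOf_iff.2 (h ▸ blockMin_mem hP j))
  exact hNC ⟨_, _, i, j, hlt, hlti, hij, _, blockOf_mem hP i, _, blockOf_mem hP j, hne,
    blockMin_mem hP i, mem_blockOf hP i, blockMin_mem hP j, mem_blockOf hP j⟩

end Partition

def fibers (g : Fin n → Fin n) : Finset (Finset (Fin n)) :=
  univ.image fun k => ({j | g j = g k} : Finset (Fin n))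

theorem isPartition_fibers (g : Fin n → Fin n) : IsPartition (fibers g) := by
  refine ⟨?_, fun k => ⟨({j | g j = g k} : Finset (Fin n)), by simp [fibers], ?_⟩⟩
  · simp only [fibers, mem_image, mem_univ, true_and, forall_exists_index]
    rintro _ k rfl
    exact ⟨k, by simp⟩
  · simp only [fibers, mem_image, mem_univ, true_and, and_imp, forall_exists_index]
    rintro _ k' rfl hk
    ext j
    simp_all

theorem isNoncrossing_fibers {g : Fin n → Fin n} (hg : IsBlockMinMap g) :
    IsNoncrossing (fibers g) := by
  rintro ⟨a, b, c, d, hab, hbc, hcd, _, hB₁, _, hB₂, hne, ha, hc, hb, hd⟩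
  simp only [fibers, mem_image, mem_univ, true_and] at hB₁ hB₂
  obtain ⟨x, rfl⟩ := hB₁
  obtain ⟨y, rfl⟩ := hB₂
  simp only [mem_filter, mem_univ, true_and] at ha hb hc hd
  have hcb : g c ≤ g b := hg.nested hbc (by rw [hc, ← ha]; exact (hg.apply_le a).trans hab.le)
  have hdc : g d ≤ g c := hg.nested hcd (by rw [hd, ← hb]; exact (hg.apply_le b).trans hbc.le)
  rw [hc, hb] at hcb
  rw [hd, hc] at hdc
  exact hne (by rw [le_antisymm hcb hdc])

theorem fibers_blockMin {P : Finset (Finset (Fin n))} (hP : IsPartition P) :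
    fibers (blockMin hP) = P := by
  have hfiber :
      (fun k => ({j | blockMin hP j = blockMin hP k} : Finset (Fin n))) = blockOf hP := by
    ext k j
    simp [blockMin_eq_blockMin_iff, blockOf_eq_blockOf_iff]
  ext B
  rw [fibers, hfiber]
  simp only [mem_image, mem_univ, true_and]
  refine ⟨fun ⟨k, hk⟩ => hk ▸ blockOf_mem hP k, fun hB => ?_⟩
  obtain ⟨k, hk⟩ := hP.1 B hB
  exact ⟨k, (eq_blockOf hP hB hk).symm⟩

theorem blockMin_fibers {g : Fin n → Fin n} (hg : IsBlockMinMap g) :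
    blockMin (isPartition_fibers g) = g := by
  funext k
  have hblock : blockOf (isPartition_fibers g) k = ({j | g j = g k} : Finset (Fin n)) :=
    (eq_blockOf _ (by simp [fibers]) (by simp)).symm
  refine blockMin_eq_of (by simp [hblock, hg.apply_apply]) fun j hj => ?_
  simp only [hblock, mem_filter, mem_univ, true_and] at hj
  exact hj ▸ hg.apply_le j

def noncrossingEquivBlockMinMap :
    {P : Finset (Finset (Fin n)) // IsPartition P ∧ IsNoncrossing P} ≃
      {g : Fin n → Fin n // IsBlockMinMap g} where
  toFun P := ⟨blockMin P.2.1, isBlockMinMap_blockMin P.2.2⟩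
  invFun g := ⟨fibers g.1, isPartition_fibers g.1, isNoncrossing_fibers g.2⟩
  left_inv P := Subtype.ext (fibers_blockMin P.2.1)
  right_inv g := Subtype.ext (blockMin_fibers g.2)

end Noncrossing

theorem stmt_0_general (n : ℕ) :
    ∃ f : {P : Finset (Finset (Fin n)) // IsPartition P ∧ IsNoncrossing P} ≃
          {p : Equiv.Perm (Fin n) // Avoids132 p},
      ∀ (x : {P : Finset (Finset (Fin n)) // IsPartition P ∧ IsNoncrossing P})
        (i : ℕ) (h1 : 1 ≤ i) (h2 : i < n),
        (i ∈ DescentSet (f x).val ↔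
          ∀ B ∈ x.val, (⟨i, h2⟩ : Fin n) ∈ B → ∀ j ∈ B, (⟨i, h2⟩ : Fin n) ≤ j) := by
  refine ⟨Noncrossing.noncrossingEquivBlockMinMap.trans Noncrossing.blockMinMapEquivAvoids132,
    fun x i h1 h2 => ?_⟩
  rw [mem_descentSet_iff _ h1 h2, ← Noncrossing.blockMin_eq_self_iff (hP := x.2.1)]
  exact Noncrossing.permOfBlockMin_descent_iff (Noncrossing.isBlockMinMap_blockMin x.2.2)
    (Nat.sub_add_cancel h1)

/-- For every positive integer `n` there is a bijection `f` from the set of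
noncrossing partitions of `[n]` onto the set of 132-avoiding permutations of `[n]` such that
for every noncrossing partition `x` and every `i` with `1 ≤ i ≤ n-1`, the index `i` is a
descent of `f x` iff the element `i+1` (which is `⟨i⟩ : Fin n` in our 0-based model) is the
smallest element of the block of `x` containing it. -/
theorem stmt_0 (n : ℕ) (hn : 0 < n) :
    ∃ f : {P : Finset (Finset (Fin n)) // IsPartition P ∧ IsNoncrossing P} ≃
          {p : Equiv.Perm (Fin n) // Avoids132 p},
      ∀ (x : {P : Finset (Finset (Fin n)) // IsPartition P ∧ IsNoncrossing P})
        (i : ℕ) (h1 : 1 ≤ i) (h2 : i < n),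
        (i ∈ DescentSet (f x).val ↔
          ∀ B ∈ x.val, (⟨i, h2⟩ : Fin n) ∈ B → ∀ j ∈ B, (⟨i, h2⟩ : Fin n) ≤ j) :=
  stmt_0_general n
end

section
/- For every positive integer n there exists a bijection f from the set of noncrossing partitions of [n] onto the set of 132-avoiding permutations of [n] such that whenever x < y in the refinement order on noncrossing partitions (i.e., every block of y is a union of blocks of x and x ≠ y), the descent set of f(y) is a proper subset of the descent set of f(x). -/
/-- `x` refines `y`: every block of `y` is a union of blocks of `x`. -/
def RefinesLE {n : ℕ} (x y : Finset (Finset (Fin n))) : Prop :=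
  ∀ C ∈ y, ∃ s ⊆ x, C = s.sup id


/-! Both sides are in bijection with the maps `g : Fin n → Fin n` such that `g i ≤ i` and
`g j ≤ i ≤ j → g j ≤ g i`. A noncrossing partition gives `g i` = the least element of the
block of `i`. A 132-avoiding permutation `p` gives `g j` = the first position whose value is at
most `p j`; conversely, the fibers of `g`, by increasing least element, receive decreasing
intervals of values, increasing along each fiber. The descents of the permutation are then
exactly the nonzero block minima, i.e. the `i > 0` with `g i = i`, and a strict coarsening of
the partition loses some block minimum. -/

open Finset

variable {n : ℕ}

/-! ### Noncrossing partitions and root maps -/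

/-- `g i` plays the role of the least element of the block of `i`; the second condition is the
noncrossing condition. -/
structure IsNoncrossingRoot (g : Fin n → Fin n) : Prop where
  apply_le (i : Fin n) : g i ≤ i
  apply_le_apply {i j : Fin n} : g j ≤ i → i ≤ j → g j ≤ g i

theorem IsNoncrossingRoot.apply_apply {g : Fin n → Fin n} (hg : IsNoncrossingRoot g)
    (i : Fin n) : g (g i) = g i :=
  le_antisymm (hg.apply_le _) (hg.apply_le_apply le_rfl (hg.apply_le i))

def fibers (g : Fin n → Fin n) : Finset (Finset (Fin n)) :=
  univ.image fun j => univ.filter (fun k => g k = g j)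

theorem isPartition_fibers (g : Fin n → Fin n) : IsPartition (fibers g) := by
  refine ⟨?_, fun i => ⟨univ.filter (fun k => g k = g i), by simp [fibers], ?_⟩⟩
  · simp only [fibers, mem_image, mem_univ, true_and, forall_exists_index, forall_apply_eq_imp_iff]
    exact fun j => ⟨j, by simp⟩
  · rintro B ⟨hB, hiB⟩
    simp only [fibers, mem_image, mem_univ, true_and] at hB
    obtain ⟨j, rfl⟩ := hB
    ext k
    simp_all

theorem exists_mem_fibers_iff {g : Fin n → Fin n} {i j : Fin n} :
    (∃ B ∈ fibers g, i ∈ B ∧ j ∈ B) ↔ g i = g j := by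
  simp only [fibers, mem_image, mem_univ, true_and, exists_exists_eq_and, mem_filter]
  exact ⟨fun ⟨_, hi, hj⟩ => hi.trans hj.symm, fun h => ⟨j, h, rfl⟩⟩

/-- Inserting `i` only makes `min'` total; for a partition it changes nothing. -/
def blockMin (P : Finset (Finset (Fin n))) (i : Fin n) : Fin n :=
  (insert i (univ.filter fun j => ∃ B ∈ P, i ∈ B ∧ j ∈ B)).min' (insert_nonempty _ _)

section blockMin

variable {P : Finset (Finset (Fin n))} {B : Finset (Fin n)} {i j : Fin n}

theorem blockMin_le (P : Finset (Finset (Fin n))) (i : Fin n) : blockMin P i ≤ i :=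
  min'_le _ _ (mem_insert_self _ _)

theorem blockMin_le_of_mem (hB : B ∈ P) (hi : i ∈ B) (hj : j ∈ B) : blockMin P i ≤ j :=
  min'_le _ _ (mem_insert_of_mem (mem_filter.2 ⟨mem_univ _, B, hB, hi, hj⟩))

theorem IsPartition.exists_mem_blockMin (hP : IsPartition P) (i : Fin n) :
    ∃ B ∈ P, i ∈ B ∧ blockMin P i ∈ B := by
  have := min'_mem _ (insert_nonempty i (univ.filter fun j => ∃ B ∈ P, i ∈ B ∧ j ∈ B))
  rcases mem_insert.1 this with h | h
  · obtain ⟨B, ⟨hB, hi⟩, -⟩ := hP.2 i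
    exact ⟨B, hB, hi, by rwa [blockMin, h]⟩
  · exact (mem_filter.1 h).2

theorem IsPartition.eq_of_mem (hP : IsPartition P) {B C : Finset (Fin n)} (hB : B ∈ P)
    (hC : C ∈ P) (hiB : i ∈ B) (hiC : i ∈ C) : B = C :=
  (hP.2 i).unique ⟨hB, hiB⟩ ⟨hC, hiC⟩

theorem IsPartition.blockMin_eq_of_mem (hP : IsPartition P) (hB : B ∈ P) (hi : i ∈ B)
    (hj : j ∈ B) : blockMin P i = blockMin P j := by
  have hle : ∀ {a b}, a ∈ B → b ∈ B → blockMin P a ≤ blockMin P b := fun {a b} ha hb => by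
    obtain ⟨C, hC, hbC, hmC⟩ := hP.exists_mem_blockMin b
    exact blockMin_le_of_mem hB ha (hP.eq_of_mem hC hB hbC hb ▸ hmC)
  exact le_antisymm (hle hi hj) (hle hj hi)

theorem IsPartition.blockMin_eq_iff (hP : IsPartition P) :
    blockMin P i = blockMin P j ↔ ∃ B ∈ P, i ∈ B ∧ j ∈ B := by
  refine ⟨fun h => ?_, fun ⟨B, hB, hi, hj⟩ => hP.blockMin_eq_of_mem hB hi hj⟩
  obtain ⟨B, hB, hiB, hmB⟩ := hP.exists_mem_blockMin i
  obtain ⟨C, hC, hjC, hmC⟩ := hP.exists_mem_blockMin j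
  rw [h] at hmB
  exact ⟨B, hB, hiB, hP.eq_of_mem hC hB hmC hmB ▸ hjC⟩

theorem IsPartition.blockMin_blockMin (hP : IsPartition P) (i : Fin n) :
    blockMin P (blockMin P i) = blockMin P i := by
  obtain ⟨B, hB, hi, hm⟩ := hP.exists_mem_blockMin i
  exact hP.blockMin_eq_of_mem hB hm hi

theorem IsPartition.filter_blockMin_eq (hP : IsPartition P) (hB : B ∈ P) (hj : j ∈ B) :
    univ.filter (fun k => blockMin P k = blockMin P j) = B := by
  ext k
  rw [mem_filter, hP.blockMin_eq_iff]
  exact ⟨fun ⟨_, C, hC, hkC, hjC⟩ => hP.eq_of_mem hC hB hjC hj ▸ hkC,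
    fun hk => ⟨mem_univ _, B, hB, hk, hj⟩⟩

theorem IsPartition.fibers_blockMin (hP : IsPartition P) : fibers (blockMin P) = P := by
  ext B
  simp only [fibers, mem_image, mem_univ, true_and]
  refine ⟨?_, fun hB => ?_⟩
  · rintro ⟨j, rfl⟩
    obtain ⟨C, ⟨hC, hjC⟩, -⟩ := hP.2 j
    rwa [hP.filter_blockMin_eq hC hjC]
  · obtain ⟨j, hj⟩ := hP.1 B hB
    exact ⟨j, hP.filter_blockMin_eq hB hj⟩

theorem IsNoncrossingRoot.blockMin_fibers {g : Fin n → Fin n} (hg : IsNoncrossingRoot g) :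
    blockMin (fibers g) = g := by
  funext j
  apply le_antisymm
  · exact blockMin_le_of_mem (B := univ.filter fun k => g k = g j)
      (mem_image_of_mem _ (mem_univ j)) (by simp) (by simp [hg.apply_apply])
  · obtain ⟨B, hB, hj, hm⟩ := (isPartition_fibers g).exists_mem_blockMin j
    rw [← exists_mem_fibers_iff.1 ⟨B, hB, hm, hj⟩]
    exact hg.apply_le _

theorem IsPartition.isNoncrossingRoot_blockMin (hP : IsPartition P) (hNC : IsNoncrossing P) :
    IsNoncrossingRoot (blockMin P) := by
  refine ⟨blockMin_le P, fun {i j} hji hij => ?_⟩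
  by_contra! hlt
  have hne : blockMin P j ≠ i := fun h => hlt.ne (by rw [← h, hP.blockMin_blockMin])
  obtain ⟨Bi, hBi, hiBi, hmBi⟩ := hP.exists_mem_blockMin i
  obtain ⟨Bj, hBj, hjBj, hmBj⟩ := hP.exists_mem_blockMin j
  have hij' : i ≠ j := by rintro rfl; exact hlt.ne rfl
  refine hNC ⟨_, _, i, j, hlt, lt_of_le_of_ne hji hne, lt_of_le_of_ne hij hij',
    Bi, hBi, Bj, hBj, ?_, hmBi, hiBi, hmBj, hjBj⟩
  rintro rfl
  exact hlt.ne (hP.blockMin_eq_of_mem hBi hiBi hjBj)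

theorem IsNoncrossingRoot.isNoncrossing_fibers {g : Fin n → Fin n} (hg : IsNoncrossingRoot g) :
    IsNoncrossing (fibers g) := by
  rintro ⟨a, b, c, d, hab, hbc, hcd, B₁, hB₁, B₂, hB₂, hne, haB, hcB, hbB, hdB⟩
  have hac : g a = g c := exists_mem_fibers_iff.1 ⟨B₁, hB₁, haB, hcB⟩
  have hbd : g b = g d := exists_mem_fibers_iff.1 ⟨B₂, hB₂, hbB, hdB⟩
  have hba : g b ≤ g a := by
    rw [hbd, hac]
    exact hg.apply_le_apply ((hbd ▸ hg.apply_le b).trans hbc.le) hcd.le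
  have hab' : g a ≤ g b := by
    rw [hac]
    exact hg.apply_le_apply ((hac ▸ hg.apply_le a).trans hab.le) hbc.le
  obtain ⟨B, hB, haB', hbB'⟩ := exists_mem_fibers_iff.2 (le_antisymm hab' hba)
  exact hne (((isPartition_fibers g).eq_of_mem hB₁ hB haB haB').trans
    ((isPartition_fibers g).eq_of_mem hB hB₂ hbB' hbB))

end blockMin

def noncrossingPartitionEquivRoot :
    {P : Finset (Finset (Fin n)) // IsPartition P ∧ IsNoncrossing P} ≃
      {g : Fin n → Fin n // IsNoncrossingRoot g} where
  toFun P := ⟨blockMin P.1, P.2.1.isNoncrossingRoot_blockMin P.2.2⟩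
  invFun g := ⟨fibers g.1, isPartition_fibers g.1, g.2.isNoncrossing_fibers⟩
  left_inv P := Subtype.ext P.2.1.fibers_blockMin
  right_inv g := Subtype.ext g.2.blockMin_fibers

/-! ### Permutations of root maps -/

/-- `rankPerm f i` is the rank of `f i` among the values of `f`. -/
def rankPerm {α : Type*} [LinearOrder α] (f : Fin n → α) : Equiv.Perm (Fin n) :=
  (Tuple.sort f)⁻¹

section rankPerm

variable {α : Type*} [LinearOrder α] {f : Fin n → α}

theorem strictMono_comp_sort (hf : Function.Injective f) : StrictMono (f ∘ Tuple.sort f) :=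
  (Tuple.monotone_sort f).strictMono_of_injective (hf.comp (Tuple.sort f).injective)

theorem rankPerm_lt_rankPerm_iff (hf : Function.Injective f) {i j : Fin n} :
    rankPerm f i < rankPerm f j ↔ f i < f j := by
  simpa [rankPerm] using ((strictMono_comp_sort hf).lt_iff_lt (a := rankPerm f i)
    (b := rankPerm f j)).symm

theorem eq_rankPerm_of_lt_imp_lt (hf : Function.Injective f) {p : Equiv.Perm (Fin n)}
    (h : ∀ i j, f i < f j → p i < p j) : p = rankPerm f := by
  have hmono : Monotone (p * Tuple.sort f) :=
    StrictMono.monotone fun a b hab => h _ _ (strictMono_comp_sort hf hab)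
  rw [Equiv.Perm.monotone_iff] at hmono
  rwa [rankPerm, eq_inv_iff_mul_eq_one]

end rankPerm

def rootKey (g : Fin n → Fin n) (i : Fin n) : (Fin n)ᵒᵈ ×ₗ Fin n :=
  toLex (OrderDual.toDual (g i), i)

theorem rootKey_injective (g : Fin n → Fin n) : Function.Injective (rootKey g) :=
  fun _ _ h => congrArg (fun x => (ofLex x).2) h

theorem rootKey_lt_rootKey_iff {g : Fin n → Fin n} {i j : Fin n} :
    rootKey g i < rootKey g j ↔ g j < g i ∨ g i = g j ∧ i < j := by
  simp [rootKey, Prod.Lex.toLex_lt_toLex]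

/-- The fibers of `g`, by increasing root, receive decreasing intervals of values, increasing
along each fiber. -/
def rootPerm (g : Fin n → Fin n) : Equiv.Perm (Fin n) :=
  rankPerm (rootKey g)

theorem rootPerm_lt_rootPerm_iff {g : Fin n → Fin n} {i j : Fin n} :
    rootPerm g i < rootPerm g j ↔ g j < g i ∨ g i = g j ∧ i < j :=
  (rankPerm_lt_rankPerm_iff (rootKey_injective g)).trans rootKey_lt_rootKey_iff

/-! ### The root map of a permutation -/

/-- `firstLE p j` is a left-to-right minimum of `p`; for 132-avoiding `p` the fibers of
`firstLE p` are the blocks of the corresponding noncrossing partition. -/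
def firstLE (p : Equiv.Perm (Fin n)) (j : Fin n) : Fin n :=
  (univ.filter fun i => p i ≤ p j).min' ⟨j, by simp⟩

section firstLE

variable {p : Equiv.Perm (Fin n)} {i j k : Fin n}

theorem firstLE_le_of_apply_le (h : p i ≤ p j) : firstLE p j ≤ i :=
  min'_le _ _ (by simp [h])

theorem firstLE_le (p : Equiv.Perm (Fin n)) (j : Fin n) : firstLE p j ≤ j :=
  firstLE_le_of_apply_le le_rfl

theorem apply_firstLE_le (p : Equiv.Perm (Fin n)) (j : Fin n) : p (firstLE p j) ≤ p j :=
  (mem_filter.1 (min'_mem (univ.filter fun i => p i ≤ p j) _)).2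

theorem apply_lt_of_lt_firstLE (h : i < firstLE p j) : p j < p i :=
  lt_of_not_ge fun h' => (firstLE_le_of_apply_le h').not_gt h

theorem Avoids132.isNoncrossingRoot_firstLE (hp : Avoids132 p) :
    IsNoncrossingRoot (firstLE p) := by
  refine ⟨firstLE_le p, fun {i j} hji hij => ?_⟩
  by_contra! hlt
  have hji' : p j < p i := (apply_lt_of_lt_firstLE hlt).trans_le (apply_firstLE_le p i)
  have hmj : p (firstLE p j) ≤ p j := apply_firstLE_le p j
  have hmi : firstLE p j < i := lt_of_le_of_ne hji fun h => (h ▸ hmj).not_gt hji'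
  have hij' : i < j := lt_of_le_of_ne hij fun h => (h ▸ hji').false
  exact hp ⟨firstLE p j, i, j, hmi, hij',
    lt_of_le_of_ne hmj fun h => (p.injective h ▸ hmi.trans hij').false, hji'⟩

/-- Across fibers of `firstLE p` this is the definition of `firstLE`; within a fiber, `p`
increases because it avoids 132. -/
theorem Avoids132.lt_of_rootKey_lt (hp : Avoids132 p)
    (h : rootKey (firstLE p) k < rootKey (firstLE p) j) : p k < p j := by
  rcases rootKey_lt_rootKey_iff.1 h with h | ⟨heq, hkj⟩
  · exact (apply_lt_of_lt_firstLE h).trans_le (apply_firstLE_le p j)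
  by_contra! hjk
  have hjk : p j < p k := lt_of_le_of_ne hjk fun h => (p.injective h ▸ hkj).false
  have hmj : p (firstLE p k) ≤ p j := heq ▸ apply_firstLE_le p j
  rcases (firstLE_le p k).eq_or_lt with hk | hk
  · exact (hk ▸ hmj).not_gt hjk
  · exact hp ⟨firstLE p k, k, j, hk, hkj,
      lt_of_le_of_ne hmj fun h => (p.injective h ▸ hk.trans hkj).false, hjk⟩

theorem Avoids132.rootPerm_firstLE (hp : Avoids132 p) : rootPerm (firstLE p) = p :=
  (eq_rankPerm_of_lt_imp_lt (rootKey_injective _) fun _ _ => hp.lt_of_rootKey_lt).symm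

theorem Avoids132.apply_lt_apply_pred_iff (hp : Avoids132 p) (hj : 0 < (j : ℕ)) :
    p j < p ⟨j - 1, by omega⟩ ↔ firstLE p j = j := by
  have hpred : (⟨j - 1, by omega⟩ : Fin n) < j := Fin.mk_lt_of_lt_val (by omega)
  refine ⟨fun h => ?_, fun h => apply_lt_of_lt_firstLE (hpred.trans_le h.ge)⟩
  by_contra hne
  have hm : firstLE p j < j := lt_of_le_of_ne (firstLE_le p j) hne
  have hmj : p (firstLE p j) < p j :=
    lt_of_le_of_ne (apply_firstLE_le p j) fun h => hne (p.injective h)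
  have hmpred : firstLE p j < ⟨j - 1, by omega⟩ := by
    refine lt_of_le_of_ne (Fin.le_def.2 ?_) fun h' => ?_
    · have := Fin.lt_def.1 hm
      show (firstLE p j : ℕ) ≤ j - 1
      omega
    · exact (h' ▸ hmj).not_gt h
  exact hp ⟨_, _, j, hmpred, hpred, hmj, h⟩

theorem Avoids132.descentSet_eq (hp : Avoids132 p) :
    DescentSet p = (univ.filter fun i : Fin n => 0 < (i : ℕ) ∧ firstLE p i = i).map
      Fin.valEmbedding := by
  ext m
  simp only [DescentSet, mem_filter, mem_range, mem_map, mem_univ, true_and,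
    Fin.valEmbedding_apply]
  constructor
  · rintro ⟨hm, hpos, hd⟩
    exact ⟨⟨m, hm⟩, ⟨hpos.1, (hp.apply_lt_apply_pred_iff (j := ⟨m, hm⟩) hpos.1).1 hd⟩, rfl⟩
  · rintro ⟨i, ⟨hpos, hfix⟩, rfl⟩
    exact ⟨i.2, ⟨hpos, i.2⟩, (hp.apply_lt_apply_pred_iff hpos).2 hfix⟩

end firstLE

namespace IsNoncrossingRoot

variable {g : Fin n → Fin n}

theorem firstLE_rootPerm (hg : IsNoncrossingRoot g) : firstLE (rootPerm g) = g := by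
  funext j
  apply le_antisymm
  · refine firstLE_le_of_apply_le (not_lt.1 fun h => ?_)
    rcases rootPerm_lt_rootPerm_iff.1 h with h | ⟨-, h⟩
    · exact (hg.apply_apply j ▸ h).false
    · exact (hg.apply_le j).not_gt h
  · by_contra! h
    refine (apply_firstLE_le (rootPerm g) j).not_gt (rootPerm_lt_rootPerm_iff.2 (Or.inl ?_))
    exact (hg.apply_le _).trans_lt h

theorem avoids132_rootPerm (hg : IsNoncrossingRoot g) : Avoids132 (rootPerm g) := by
  rintro ⟨i, j, k, hij, hjk, hik, hkj⟩
  rw [rootPerm_lt_rootPerm_iff] at hik hkj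
  have hjk' : g j < g k := hkj.resolve_right fun h => h.2.not_gt hjk
  have hj : j < g k := lt_of_not_ge fun h => (hg.apply_le_apply h hjk.le).not_gt hjk'
  have hi : g i < g k := ((hg.apply_le i).trans_lt hij).trans hj
  rcases hik with h | ⟨h, -⟩
  · exact h.not_gt hi
  · exact hi.ne h

theorem descentSet_rootPerm (hg : IsNoncrossingRoot g) :
    DescentSet (rootPerm g) =
      (univ.filter fun i : Fin n => 0 < (i : ℕ) ∧ g i = i).map Fin.valEmbedding := by
  rw [hg.avoids132_rootPerm.descentSet_eq, hg.firstLE_rootPerm]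

end IsNoncrossingRoot

def rootEquivAvoids132 :
    {g : Fin n → Fin n // IsNoncrossingRoot g} ≃ {p : Equiv.Perm (Fin n) // Avoids132 p} where
  toFun g := ⟨rootPerm g.1, g.2.avoids132_rootPerm⟩
  invFun p := ⟨firstLE p.1, p.2.isNoncrossingRoot_firstLE⟩
  left_inv g := Subtype.ext g.2.firstLE_rootPerm
  right_inv p := Subtype.ext p.2.rootPerm_firstLE

/-! ### Refinement -/

theorem RefinesLE.exists_mem_of_mem {x y : Finset (Finset (Fin n))} (href : RefinesLE x y)
    (hx : IsPartition x) (hy : IsPartition y) {B : Finset (Fin n)} (hB : B ∈ x) {i j : Fin n}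
    (hi : i ∈ B) (hj : j ∈ B) : ∃ C ∈ y, i ∈ C ∧ j ∈ C := by
  obtain ⟨C, ⟨hC, hiC⟩, -⟩ := hy.2 i
  obtain ⟨s, hs, rfl⟩ := href C hC
  obtain ⟨B', hB's, hiB'⟩ := mem_sup.1 hiC
  obtain rfl := hx.eq_of_mem hB (hs hB's) hi hiB'
  exact ⟨_, hC, hiC, le_sup (f := id) hB's hj⟩

theorem RefinesLE.blockMin_le_blockMin {x y : Finset (Finset (Fin n))} (href : RefinesLE x y)
    (hx : IsPartition x) (hy : IsPartition y) (i : Fin n) : blockMin y i ≤ blockMin x i := by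
  obtain ⟨B, hB, hi, hm⟩ := hx.exists_mem_blockMin i
  obtain ⟨C, hC, hiC, hmC⟩ := href.exists_mem_of_mem hx hy hB hi hm
  exact blockMin_le_of_mem hC hiC hmC

theorem RefinesLE.blockMin_blockMin {x y : Finset (Finset (Fin n))} (href : RefinesLE x y)
    (hx : IsPartition x) (hy : IsPartition y) (i : Fin n) :
    blockMin y (blockMin x i) = blockMin y i := by
  obtain ⟨B, hB, hi, hm⟩ := hx.exists_mem_blockMin i
  obtain ⟨C, hC, hmC, hiC⟩ := href.exists_mem_of_mem hx hy hB hm hi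
  exact hy.blockMin_eq_of_mem hC hmC hiC

theorem IsNoncrossingRoot.filter_apply_eq_ssubset {g₁ g₂ : Fin n → Fin n}
    (hg₁ : IsNoncrossingRoot g₁) (hle : ∀ i, g₂ i ≤ g₁ i) (hcomp : ∀ i, g₂ (g₁ i) = g₂ i)
    (hne : g₁ ≠ g₂) :
    univ.filter (fun i : Fin n => 0 < (i : ℕ) ∧ g₂ i = i) ⊂
      univ.filter (fun i : Fin n => 0 < (i : ℕ) ∧ g₁ i = i) := by
  refine Finset.ssubset_iff_subset_ne.2 ⟨fun i hi => ?_, fun heq => ?_⟩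
  · simp only [mem_filter, mem_univ, true_and] at hi ⊢
    exact ⟨hi.1, le_antisymm (hg₁.apply_le i) (hi.2.symm.trans_le (hle i))⟩
  · obtain ⟨j, hj⟩ := Function.ne_iff.1 hne
    have hlt : g₂ (g₁ j) < g₁ j := hcomp j ▸ lt_of_le_of_ne (hle j) (Ne.symm hj)
    have hmem : g₁ j ∈ univ.filter (fun i : Fin n => 0 < (i : ℕ) ∧ g₁ i = i) := by
      simp only [mem_filter, mem_univ, true_and, hg₁.apply_apply j, and_true]
      exact (Nat.zero_le _).trans_lt (Fin.lt_def.1 hlt)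
    rw [← heq, mem_filter] at hmem
    exact hlt.ne hmem.2.2

theorem stmt_1_general (n : ℕ) :
    ∃ f : {P : Finset (Finset (Fin n)) // IsPartition P ∧ IsNoncrossing P} ≃
          {p : Equiv.Perm (Fin n) // Avoids132 p},
      ∀ x y : {P : Finset (Finset (Fin n)) // IsPartition P ∧ IsNoncrossing P},
        RefinesLE x.val y.val → x.val ≠ y.val →
        DescentSet (f y).val ⊂ DescentSet (f x).val := by
  refine ⟨noncrossingPartitionEquivRoot.trans rootEquivAvoids132, ?_⟩
  rintro ⟨x, hx, hxNC⟩ ⟨y, hy, hyNC⟩ (href : RefinesLE x y) (hne : x ≠ y)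
  have hxroot := hx.isNoncrossingRoot_blockMin hxNC
  show DescentSet (rootPerm (blockMin y)) ⊂ DescentSet (rootPerm (blockMin x))
  rw [(hy.isNoncrossingRoot_blockMin hyNC).descentSet_rootPerm, hxroot.descentSet_rootPerm,
    map_ssubset_map]
  refine hxroot.filter_apply_eq_ssubset (href.blockMin_le_blockMin hx hy)
    (href.blockMin_blockMin hx hy) fun h => hne ?_
  rw [← hx.fibers_blockMin, ← hy.fibers_blockMin, h]

/-- For every positive integer `n` there is a bijection `f` from the set of
noncrossing partitions of `[n]` onto the set of 132-avoiding permutations of `[n]` such that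
whenever `x < y` in the refinement order (every block of `y` is a union of blocks of `x` and
`x ≠ y`), the descent set of `f y` is a proper subset of the descent set of `f x`. -/
theorem stmt_1 (n : ℕ) (hn : 0 < n) :
    ∃ f : {P : Finset (Finset (Fin n)) // IsPartition P ∧ IsNoncrossing P} ≃
          {p : Equiv.Perm (Fin n) // Avoids132 p},
      ∀ x y : {P : Finset (Finset (Fin n)) // IsPartition P ∧ IsNoncrossing P},
        RefinesLE x.val y.val → x.val ≠ y.val →
        DescentSet (f y).val ⊂ DescentSet (f x).val :=
  stmt_1_general n
end

section
/- For every positive integer n and every integer k with 0 ≤ k ≤ n-1, the number of 132-avoiding permutations of [n] having exactly k descents equals the number of noncrossing partitions of [n] having exactly k+1 blocks. -/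
namespace Stmt2
open Finset

attribute [local instance] Classical.propDecidable

variable {n : ℕ}

def dsc (p : Equiv.Perm (Fin n)) (t : ℕ) : Prop :=
  ∃ h : t + 1 < n, p ⟨t + 1, h⟩ < p ⟨t, by omega⟩

noncomputable def runIdx (p : Equiv.Perm (Fin n)) (i : ℕ) : ℕ :=
  ((Finset.range i).filter (dsc p)).card

lemma runIdx_zero (p : Equiv.Perm (Fin n)) : runIdx p 0 = 0 := by
  simp [runIdx]

lemma runIdx_succ (p : Equiv.Perm (Fin n)) (t : ℕ) :
    runIdx p (t + 1) = runIdx p t + if dsc p t then 1 else 0 := by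
  unfold runIdx
  rw [Finset.range_add_one, Finset.filter_insert]
  split
  · rw [Finset.card_insert_of_notMem (by simp)]
  · simp

lemma runIdx_mono (p : Equiv.Perm (Fin n)) {i j : ℕ} (h : i ≤ j) :
    runIdx p i ≤ runIdx p j :=
  Finset.card_le_card (Finset.filter_subset_filter _ (Finset.range_subset_range.2 h))

lemma not_dsc_of_run_eq (p : Equiv.Perm (Fin n)) {i j t : ℕ}
    (hij : runIdx p i = runIdx p j) (h1 : i ≤ t) (h2 : t < j) : ¬ dsc p t := by
  intro hd
  have e1 : runIdx p i ≤ runIdx p t := runIdx_mono p h1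
  have e2 : runIdx p (t + 1) ≤ runIdx p j := runIdx_mono p h2
  have := runIdx_succ p t
  rw [if_pos hd] at this
  omega

lemma not_dsc_lt {p : Equiv.Perm (Fin n)} {t : ℕ} (h : t + 1 < n)
    (hnd : ¬ dsc p t) : p ⟨t, by omega⟩ < p ⟨t + 1, h⟩ := by
  have hne : p ⟨t, by omega⟩ ≠ p ⟨t + 1, h⟩ := by
    intro he
    have := p.injective he
    simp [Fin.ext_iff] at this
  have hnl : ¬ (p ⟨t + 1, h⟩ < p ⟨t, by omega⟩) := fun hlt => hnd ⟨h, hlt⟩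
  exact lt_of_le_of_ne (le_of_not_gt hnl) hne

lemma run_lt_aux (p : Equiv.Perm (Fin n)) :
    ∀ (d i : ℕ) (hi : i < n) (hj : i + 1 + d < n),
      runIdx p i = runIdx p (i + 1 + d) → p ⟨i, hi⟩ < p ⟨i + 1 + d, hj⟩ := by
  intro d
  induction d with
  | zero =>
    intro i hi hj hr
    exact not_dsc_lt hj (not_dsc_of_run_eq p hr (le_refl _) (by omega))
  | succ d ih =>
    intro i hi hj hr
    have hj' : i + 1 + d < n := by omega
    have h1 : runIdx p i = runIdx p (i + 1 + d) := by
      have a1 := runIdx_mono p (by omega : i ≤ i + 1 + d)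
      have a2 := runIdx_mono p (by omega : i + 1 + d ≤ i + 1 + (d + 1))
      omega
    have hpj' : p ⟨i, hi⟩ < p ⟨i + 1 + d, hj'⟩ := ih i hi hj' h1
    have hnd : ¬ dsc p (i + 1 + d) :=
      not_dsc_of_run_eq p hr (by omega) (by omega)
    have hstep : p ⟨i + 1 + d, hj'⟩ < p ⟨i + 1 + d + 1, by omega⟩ := not_dsc_lt (by omega) hnd
    exact lt_trans hpj' hstep

/-- Strict increase within a run. -/
lemma run_lt (p : Equiv.Perm (Fin n)) {i j : Fin n} (hij : i < j)
    (hr : runIdx p i = runIdx p j) : p i < p j := by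
  have hij' : (i : ℕ) < (j : ℕ) := hij
  have hjn : (j : ℕ) < n := j.isLt
  have key := run_lt_aux p ((j : ℕ) - (i : ℕ) - 1) i i.isLt (by omega) (by
    have he : (i : ℕ) + 1 + ((j : ℕ) - (i : ℕ) - 1) = (j : ℕ) := by omega
    rw [he]; exact hr)
  have hji : j = ⟨(i : ℕ) + 1 + ((j : ℕ) - (i : ℕ) - 1), by omega⟩ := Fin.ext (by simp only [Fin.val_mk]; omega)
  rw [hji]
  exact key

lemma run_le (p : Equiv.Perm (Fin n)) {i j : Fin n} (hij : i ≤ j)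
    (hr : runIdx p i = runIdx p j) : p i ≤ p j := by
  rcases eq_or_lt_of_le hij with h | h
  · rw [h]
  · exact le_of_lt (run_lt p h hr)

/-- Different runs are ordered by position. -/
lemma pos_lt_of_runIdx_lt (p : Equiv.Perm (Fin n)) {i j : Fin n}
    (h : runIdx p i < runIdx p j) : i < j := by
  by_contra hc
  exact absurd (runIdx_mono p (Fin.le_def.mp (le_of_not_gt hc))) (by omega)

/-- Within a run, position order matches value order. -/
lemma run_lt_iff (p : Equiv.Perm (Fin n)) {i j : Fin n}
    (hr : runIdx p i = runIdx p j) : i < j ↔ p i < p j := by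
  constructor
  · exact fun h => run_lt p h hr
  · intro h
    rcases lt_trichotomy i j with h' | h' | h'
    · exact h'
    · rw [h'] at h; exact absurd h (lt_irrefl _)
    · exact absurd (run_lt p h' hr.symm) (by omega)

lemma descentSet_card (p : Equiv.Perm (Fin n)) :
    (DescentSet p).card = runIdx p (n - 1) := by
  have himg : DescentSet p = Finset.image (· + 1) ((Finset.range (n - 1)).filter (dsc p)) := by
    ext i
    simp only [DescentSet, Finset.mem_filter, Finset.mem_range, Finset.mem_image]
    constructor
    · rintro ⟨hin, ⟨h1, h2⟩, hlt⟩
      have hd : dsc p (i - 1) := by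
        refine ⟨by omega, ?_⟩
        simp only [Nat.sub_add_cancel h1]
        exact hlt
      exact ⟨i - 1, ⟨by omega, hd⟩, by omega⟩
    · rintro ⟨t, ⟨htn, h, hlt⟩, rfl⟩
      refine ⟨by omega, ⟨by omega, by omega⟩, ?_⟩
      simp only [Nat.add_sub_cancel]
      exact hlt
  rw [himg, Finset.card_image_of_injective _ (add_left_injective 1)]
  rfl

/-- Discrete IVT for `runIdx`. -/
lemma runIdx_surj (p : Equiv.Perm (Fin n)) (hn : 0 < n) {r : ℕ}
    (hr : r ≤ runIdx p (n - 1)) : ∃ i : Fin n, runIdx p (i : ℕ) = r := by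
  rcases Nat.eq_zero_or_pos r with rfl | hrpos
  · exact ⟨⟨0, hn⟩, runIdx_zero p⟩
  · have hex : ∃ m, r ≤ runIdx p m := ⟨n - 1, hr⟩
    set m := Nat.find hex with hm
    have hmr : r ≤ runIdx p m := Nat.find_spec hex
    have hmn : m ≤ n - 1 := Nat.find_le hr
    have hm0 : m ≠ 0 := by
      intro h0
      rw [h0, runIdx_zero] at hmr
      omega
    have hprev : ¬ r ≤ runIdx p (m - 1) := Nat.find_min hex (by omega)
    have hstep := runIdx_succ p (m - 1)
    have hms : m - 1 + 1 = m := by omega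
    rw [hms] at hstep
    refine ⟨⟨m, by omega⟩, ?_⟩
    simp only [Fin.val_mk]
    split at hstep <;> omega

noncomputable def fiber (p : Equiv.Perm (Fin n)) (r : ℕ) : Finset (Fin n) :=
  Finset.univ.filter fun w => runIdx p ((p.symm w : Fin n) : ℕ) = r

lemma mem_fiber {p : Equiv.Perm (Fin n)} {r : ℕ} {w : Fin n} :
    w ∈ fiber p r ↔ runIdx p ((p.symm w : Fin n) : ℕ) = r := by
  simp [fiber]

lemma apply_mem_fiber (p : Equiv.Perm (Fin n)) (i : Fin n) :
    p i ∈ fiber p (runIdx p (i : ℕ)) := by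
  simp [fiber]

/-- The set partition of the values of `p` into ascending runs. -/
noncomputable def toPart (p : Equiv.Perm (Fin n)) : Finset (Finset (Fin n)) :=
  (Finset.univ.image fun i : Fin n => runIdx p (i : ℕ)).image (fiber p)

lemma mem_toPart {p : Equiv.Perm (Fin n)} {B : Finset (Fin n)} :
    B ∈ toPart p ↔ ∃ i : Fin n, fiber p (runIdx p (i : ℕ)) = B := by
  simp [toPart]

lemma toPart_isPartition (p : Equiv.Perm (Fin n)) : IsPartition (toPart p) := by
  constructor
  · intro B hB
    obtain ⟨i, rfl⟩ := mem_toPart.mp hB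
    exact ⟨p i, apply_mem_fiber p i⟩
  · intro w
    refine ⟨fiber p (runIdx p ((p.symm w : Fin n) : ℕ)), ⟨mem_toPart.mpr ⟨p.symm w, rfl⟩, ?_⟩, ?_⟩
    · simp [fiber]
    · rintro B ⟨hB, hwB⟩
      obtain ⟨i, rfl⟩ := mem_toPart.mp hB
      rw [mem_fiber.mp hwB]

lemma fiber_eq_iff {p : Equiv.Perm (Fin n)} {i : Fin n} {r : ℕ}
    (h : fiber p (runIdx p (i : ℕ)) = fiber p r) : runIdx p (i : ℕ) = r := by
  have := apply_mem_fiber p i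
  rw [h] at this
  simpa using mem_fiber.mp this

lemma toPart_card (p : Equiv.Perm (Fin n)) (hn : 0 < n) :
    (toPart p).card = runIdx p (n - 1) + 1 := by
  have himg : (Finset.univ.image fun i : Fin n => runIdx p (i : ℕ)) =
      Finset.range (runIdx p (n - 1) + 1) := by
    ext r
    simp only [Finset.mem_image, Finset.mem_univ, true_and, Finset.mem_range,
      Nat.lt_succ_iff]
    constructor
    · rintro ⟨i, rfl⟩
      exact runIdx_mono p (by omega)
    · exact fun h => runIdx_surj p hn h
  rw [toPart, himg, Finset.card_image_of_injOn, Finset.card_range]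
  intro r hr r' hr' heq
  simp only [Finset.mem_coe, Finset.mem_range, Nat.lt_succ_iff] at hr hr'
  obtain ⟨i, rfl⟩ := runIdx_surj p hn hr
  exact fiber_eq_iff heq

lemma toPart_noncrossing (p : Equiv.Perm (Fin n)) (hA : Avoids132 p) :
    IsNoncrossing (toPart p) := by
  rintro ⟨a, b, c, d, hab, hbc, hcd, B₁, hB₁, B₂, hB₂, hne, haB, hcB, hbB, hdB⟩
  obtain ⟨i₁, rfl⟩ := mem_toPart.mp hB₁
  obtain ⟨i₂, rfl⟩ := mem_toPart.mp hB₂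
  set r₁ := runIdx p (i₁ : ℕ)
  set r₂ := runIdx p (i₂ : ℕ)
  have ha := mem_fiber.mp haB
  have hc := mem_fiber.mp hcB
  have hb := mem_fiber.mp hbB
  have hd := mem_fiber.mp hdB
  have hrne : r₁ ≠ r₂ := fun h => hne (by rw [h])
  have hac : p.symm a < p.symm c := by
    rw [run_lt_iff p (by rw [ha, hc])]
    simpa using lt_trans hab hbc
  have hbd : p.symm b < p.symm d := by
    rw [run_lt_iff p (by rw [hb, hd])]
    simpa using lt_trans hbc hcd
  rcases lt_or_gt_of_ne hrne with h12 | h21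
  · -- run of a,c before run of b : pattern (pos a, pos c, pos b)
    have hcb : p.symm c < p.symm b := pos_lt_of_runIdx_lt p (by rw [hc, hb]; exact h12)
    exact hA ⟨p.symm a, p.symm c, p.symm b, hac, hcb, by simpa using hab, by simpa using hbc⟩
  · -- run of b,d before run of a,c : pattern (pos b, pos d, pos c)
    have hdc : p.symm d < p.symm c := pos_lt_of_runIdx_lt p (by rw [hd, hc]; exact h21)
    exact hA ⟨p.symm b, p.symm d, p.symm c, hbd, hdc, by simpa using hbc, by simpa using hcd⟩

/-- The block of `P` containing `i`. -/
noncomputable def blk (P : Finset (Finset (Fin n))) (i : Fin n) : Finset (Fin n) :=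
  Finset.univ.filter fun j => ∃ B ∈ P, i ∈ B ∧ j ∈ B

lemma mem_blk {P : Finset (Finset (Fin n))} {i j : Fin n} :
    j ∈ blk P i ↔ ∃ B ∈ P, i ∈ B ∧ j ∈ B := by
  simp [blk]

lemma blk_eq {P : Finset (Finset (Fin n))} (hP : IsPartition P)
    {B : Finset (Fin n)} {i : Fin n} (hB : B ∈ P) (hi : i ∈ B) : blk P i = B := by
  ext j
  rw [mem_blk]
  constructor
  · rintro ⟨B', hB', hiB', hjB'⟩
    obtain ⟨C, -, hC⟩ := hP.2 i
    rw [hC B' ⟨hB', hiB'⟩] at hjB'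
    rwa [hC B ⟨hB, hi⟩]
  · exact fun hj => ⟨B, hB, hi, hj⟩

lemma blk_mem {P : Finset (Finset (Fin n))} (hP : IsPartition P) (i : Fin n) :
    blk P i ∈ P ∧ i ∈ blk P i := by
  obtain ⟨B, ⟨hB, hi⟩, -⟩ := hP.2 i
  rw [blk_eq hP hB hi]
  exact ⟨hB, hi⟩

lemma mem_blk_iff {P : Finset (Finset (Fin n))} (hP : IsPartition P) {i j : Fin n} :
    j ∈ blk P i ↔ blk P j = blk P i := by
  constructor
  · intro hj
    exact blk_eq hP ((blk_mem hP i).1) hj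
  · intro h
    rw [← h]
    exact (blk_mem hP j).2

/-- The minimum of the block containing `i`. -/
noncomputable def mval (P : Finset (Finset (Fin n))) (i : Fin n) : Fin n :=
  if h : (blk P i).Nonempty then (blk P i).min' h else i

lemma mval_mem {P : Finset (Finset (Fin n))} (hP : IsPartition P) (i : Fin n) :
    mval P i ∈ blk P i := by
  rw [mval, dif_pos ⟨i, (blk_mem hP i).2⟩]
  exact Finset.min'_mem _ _

lemma mval_le {P : Finset (Finset (Fin n))} (hP : IsPartition P) {i j : Fin n}
    (hj : j ∈ blk P i) : mval P i ≤ j := by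
  rw [mval, dif_pos ⟨i, (blk_mem hP i).2⟩]
  exact Finset.min'_le _ _ hj

lemma mval_le_self {P : Finset (Finset (Fin n))} (hP : IsPartition P) (i : Fin n) :
    mval P i ≤ i := mval_le hP (blk_mem hP i).2

lemma mval_congr {P : Finset (Finset (Fin n))} (hP : IsPartition P) {i j : Fin n}
    (h : blk P i = blk P j) : mval P i = mval P j := by
  rw [mval, mval, dif_pos ⟨i, (blk_mem hP i).2⟩, dif_pos ⟨j, (blk_mem hP j).2⟩]
  exact le_antisymm (Finset.min'_le _ _ (by rw [h]; exact Finset.min'_mem _ _))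
    (Finset.min'_le _ _ (by rw [← h]; exact Finset.min'_mem _ _))

lemma mval_eq_iff {P : Finset (Finset (Fin n))} (hP : IsPartition P) {i j : Fin n} :
    mval P i = mval P j ↔ blk P i = blk P j := by
  constructor
  · intro h
    have h1 : mval P i ∈ blk P i := mval_mem hP i
    have h2 : mval P i ∈ blk P j := h ▸ mval_mem hP j
    rw [mem_blk_iff hP] at h1 h2
    rw [← h1, ← h2]
  · exact mval_congr hP

/-- Linear order: blocks sorted by decreasing minima, increasing within a block. -/
def prec (P : Finset (Finset (Fin n))) (u w : Fin n) : Prop :=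
  mval P w < mval P u ∨ (mval P u = mval P w ∧ u < w)

lemma prec_irrefl (P : Finset (Finset (Fin n))) (u : Fin n) : ¬ prec P u u := by
  rintro (h | ⟨-, h⟩) <;> exact absurd h (lt_irrefl _)

lemma prec_trans {P : Finset (Finset (Fin n))} {u v w : Fin n}
    (h1 : prec P u v) (h2 : prec P v w) : prec P u w := by
  rcases h1 with h1 | ⟨e1, l1⟩ <;> rcases h2 with h2 | ⟨e2, l2⟩
  · exact Or.inl (lt_trans h2 h1)
  · exact Or.inl (e2 ▸ h1)
  · exact Or.inl (e1 ▸ h2)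
  · exact Or.inr ⟨e1.trans e2, lt_trans l1 l2⟩

lemma prec_total (P : Finset (Finset (Fin n))) (u w : Fin n) :
    prec P u w ∨ u = w ∨ prec P w u := by
  rcases lt_trichotomy (mval P u) (mval P w) with h | h | h
  · exact Or.inr (Or.inr (Or.inl h))
  · rcases lt_trichotomy u w with h' | h' | h'
    · exact Or.inl (Or.inr ⟨h, h'⟩)
    · exact Or.inr (Or.inl h')
    · exact Or.inr (Or.inr (Or.inr ⟨h.symm, h'⟩))
  · exact Or.inl (Or.inl h)

noncomputable def rk (P : Finset (Finset (Fin n))) (w : Fin n) : ℕ :=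
  (Finset.univ.filter fun u => prec P u w).card

lemma rk_lt_of_prec {P : Finset (Finset (Fin n))} {u w : Fin n}
    (h : prec P u w) : rk P u < rk P w := by
  apply Finset.card_lt_card
  constructor
  · intro v hv
    simp only [Finset.mem_filter, Finset.mem_univ, true_and] at hv ⊢
    exact prec_trans hv h
  · intro hsub
    have hu : u ∈ Finset.univ.filter fun v => prec P v w := by
      simp only [Finset.mem_filter, Finset.mem_univ, true_and]
      exact h
    have := hsub hu
    simp only [Finset.mem_filter, Finset.mem_univ, true_and] at this
    exact prec_irrefl P u this

lemma prec_iff_rk {P : Finset (Finset (Fin n))} {u w : Fin n} :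
    prec P u w ↔ rk P u < rk P w := by
  constructor
  · exact rk_lt_of_prec
  · intro h
    rcases prec_total P u w with h' | rfl | h'
    · exact h'
    · omega
    · exact absurd (rk_lt_of_prec h') (by omega)

lemma rk_lt_n (P : Finset (Finset (Fin n))) (w : Fin n) : rk P w < n := by
  have : (Finset.univ.filter fun u => prec P u w) ⊆ Finset.univ.erase w := by
    intro v hv
    simp only [Finset.mem_filter, Finset.mem_univ, true_and] at hv
    refine Finset.mem_erase.mpr ⟨?_, Finset.mem_univ _⟩
    intro he
    rw [he] at hv
    exact prec_irrefl P w hv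
  have h1 := Finset.card_le_card this
  have h2 : (Finset.univ.erase w).card = n - 1 := by
    rw [Finset.card_erase_of_mem (Finset.mem_univ _), Finset.card_univ, Fintype.card_fin]
  have h3 := w.isLt
  rw [h2] at h1
  unfold rk
  omega

noncomputable def rkFun (P : Finset (Finset (Fin n))) : Fin n → Fin n :=
  fun w => ⟨rk P w, rk_lt_n P w⟩

lemma rkFun_injective (P : Finset (Finset (Fin n))) : Function.Injective (rkFun P) := by
  intro u w h
  simp only [rkFun, Fin.mk.injEq] at h
  rcases prec_total P u w with h' | h' | h'
  · exact absurd (rk_lt_of_prec h') (by omega)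
  · exact h'
  · exact absurd (rk_lt_of_prec h') (by omega)

/-- The permutation associated with a partition: blocks listed by decreasing minima,
each block in increasing order. -/
noncomputable def psi (P : Finset (Finset (Fin n))) : Equiv.Perm (Fin n) :=
  (Equiv.ofBijective (rkFun P) ((Finite.injective_iff_bijective).mp (rkFun_injective P))).symm

lemma psi_symm_apply (P : Finset (Finset (Fin n))) (w : Fin n) :
    ((psi P).symm w : ℕ) = rk P w := by
  simp [psi, rkFun, Equiv.ofBijective]

lemma rk_psi (P : Finset (Finset (Fin n))) (i : Fin n) : rk P (psi P i) = (i : ℕ) := by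
  have := psi_symm_apply P (psi P i)
  rw [Equiv.symm_apply_apply] at this
  exact this.symm

lemma lt_iff_prec (P : Finset (Finset (Fin n))) (i j : Fin n) :
    i < j ↔ prec P (psi P i) (psi P j) := by
  rw [prec_iff_rk, rk_psi, rk_psi, Fin.lt_def]

noncomputable def posSet (p : Equiv.Perm (Fin n)) (r : ℕ) : Finset (Fin n) :=
  Finset.univ.filter fun i : Fin n => runIdx p (i : ℕ) = r

lemma mem_posSet {p : Equiv.Perm (Fin n)} {r : ℕ} {i : Fin n} :
    i ∈ posSet p r ↔ runIdx p (i : ℕ) = r := by simp [posSet]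

lemma posSet_min_runIdx {p : Equiv.Perm (Fin n)} {r : ℕ} (hne : (posSet p r).Nonempty) :
    runIdx p (((posSet p r).min' hne : Fin n) : ℕ) = r :=
  mem_posSet.mp (Finset.min'_mem _ _)

lemma fiber_min_le {p : Equiv.Perm (Fin n)} {r : ℕ} (hne : (posSet p r).Nonempty)
    {w : Fin n} (hw : w ∈ fiber p r) : p ((posSet p r).min' hne) ≤ w := by
  have hs := posSet_min_runIdx hne
  have hw' := mem_fiber.mp hw
  have hle : (posSet p r).min' hne ≤ p.symm w :=
    Finset.min'_le _ _ (mem_posSet.mpr hw')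
  have := run_le p hle (hs.trans hw'.symm)
  simpa using this

lemma blk_toPart (p : Equiv.Perm (Fin n)) (u : Fin n) :
    blk (toPart p) u = fiber p (runIdx p ((p.symm u : Fin n) : ℕ)) :=
  blk_eq (toPart_isPartition p) (mem_toPart.mpr ⟨p.symm u, rfl⟩) (mem_fiber.mpr rfl)

lemma mval_toPart (p : Equiv.Perm (Fin n)) (u : Fin n) :
    mval (toPart p) u =
      p ((posSet p (runIdx p ((p.symm u : Fin n) : ℕ))).min'
        ⟨p.symm u, mem_posSet.mpr rfl⟩) := by
  set r := runIdx p ((p.symm u : Fin n) : ℕ)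
  have hne : (posSet p r).Nonempty := ⟨p.symm u, mem_posSet.mpr rfl⟩
  have hmem : u ∈ blk (toPart p) u := (blk_mem (toPart_isPartition p) u).2
  rw [mval, dif_pos ⟨u, hmem⟩]
  have hsf : p ((posSet p r).min' hne) ∈ blk (toPart p) u := by
    rw [blk_toPart]
    exact mem_fiber.mpr (by simpa using posSet_min_runIdx hne)
  apply le_antisymm
  · exact Finset.min'_le _ _ hsf
  · have := fiber_min_le hne (w := (blk (toPart p) u).min' ⟨u, hmem⟩)
      (by rw [← blk_toPart]; exact Finset.min'_mem _ _)
    exact this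

/-- Run minima are strictly decreasing for a 132-avoiding permutation. -/
lemma run_minima_dec {p : Equiv.Perm (Fin n)} (hA : Avoids132 p) {r₁ r₂ : ℕ}
    (h12 : r₁ < r₂) (hne₁ : (posSet p r₁).Nonempty) (hne₂ : (posSet p r₂).Nonempty) :
    p ((posSet p r₂).min' hne₂) < p ((posSet p r₁).min' hne₁) := by
  set s₁ := (posSet p r₁).min' hne₁ with hs₁
  set s₂ := (posSet p r₂).min' hne₂ with hs₂
  have hr₁ : runIdx p (s₁ : ℕ) = r₁ := posSet_min_runIdx hne₁
  have hr₂ : runIdx p (s₂ : ℕ) = r₂ := posSet_min_runIdx hne₂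
  clear_value s₁ s₂
  -- s₂ > 0
  have hs₂pos : 0 < (s₂ : ℕ) := by
    rcases Nat.eq_zero_or_pos (s₂ : ℕ) with h0 | h
    · rw [h0, runIdx_zero] at hr₂; omega
    · exact h
  set t : ℕ := (s₂ : ℕ) - 1 with ht
  have htn : t + 1 < n := by have := s₂.isLt; omega
  -- runIdx at t is < r₂
  have htlt : runIdx p t < r₂ := by
    have hmono : runIdx p t ≤ runIdx p (s₂ : ℕ) := runIdx_mono p (by omega)
    rcases lt_or_eq_of_le hmono with h | h
    · omega
    · exfalso
      have hmem : (⟨t, by omega⟩ : Fin n) ∈ posSet p r₂ :=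
        mem_posSet.mpr (by simp only [Fin.val_mk]; rw [h]; exact hr₂)
      have hle := Finset.min'_le _ _ hmem
      rw [← hs₂] at hle
      have : (s₂ : ℕ) ≤ t := hle
      omega
  have hstep := runIdx_succ p t
  have hts : t + 1 = (s₂ : ℕ) := by omega
  rw [hts, hr₂] at hstep
  have hd : dsc p t := by
    by_contra hnd
    rw [if_neg hnd] at hstep
    omega
  have htr : runIdx p t = r₂ - 1 := by
    rw [if_pos hd] at hstep
    omega
  -- s₁ ≤ t
  have hs₁t : (s₁ : ℕ) ≤ t := by
    by_contra hc
    have hmono : runIdx p t ≤ runIdx p (s₁ : ℕ) := runIdx_mono p (by omega)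
    have hmem : (⟨t, by omega⟩ : Fin n) ∈ posSet p r₁ :=
      mem_posSet.mpr (by simp only [Fin.val_mk]; omega)
    have hle := Finset.min'_le _ _ hmem
    rw [← hs₁] at hle
    have : (s₁ : ℕ) ≤ t := hle
    omega
  -- the descent gives p ⟨t⟩ > p s₂
  obtain ⟨h', hdlt⟩ := hd
  have hps₂ : p s₂ = p ⟨t + 1, h'⟩ := by congr 1; exact Fin.ext (by simp only [Fin.val_mk]; omega)
  rcases eq_or_lt_of_le hs₁t with heq | hlt
  · -- s₁ = t : direct descent
    have hps₁ : p s₁ = p ⟨t, by omega⟩ := by congr 1; exact Fin.ext (by simp only [Fin.val_mk]; omega)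
    rw [hps₁, hps₂]
    exact hdlt
  · -- s₁ < t : use 132-avoidance
    by_contra hc
    push_neg at hc
    have hne' : p s₁ ≠ p s₂ := by
      intro he
      have := p.injective he
      rw [this] at hr₁
      omega
    have hlt' : p s₁ < p s₂ := lt_of_le_of_ne hc hne'
    refine hA ⟨s₁, ⟨t, by omega⟩, ⟨t + 1, h'⟩, ?_, ?_, ?_, ?_⟩
    · exact hlt
    · exact Nat.lt_succ_self t
    · rw [← hps₂]; exact hlt'
    · rw [← hps₂]; rw [hps₂]; exact hdlt

lemma prec_toPart_iff {p : Equiv.Perm (Fin n)} (hA : Avoids132 p) (u w : Fin n) :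
    prec (toPart p) u w ↔ p.symm u < p.symm w := by
  have hneu : (posSet p (runIdx p ((p.symm u : Fin n) : ℕ))).Nonempty :=
    ⟨p.symm u, mem_posSet.mpr rfl⟩
  have hnew : (posSet p (runIdx p ((p.symm w : Fin n) : ℕ))).Nonempty :=
    ⟨p.symm w, mem_posSet.mpr rfl⟩
  have hmu := mval_toPart p u
  have hmw := mval_toPart p w
  rcases lt_trichotomy (runIdx p ((p.symm u : Fin n) : ℕ))
    (runIdx p ((p.symm w : Fin n) : ℕ)) with h | h | h
  · constructor
    · intro _
      exact pos_lt_of_runIdx_lt p h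
    · intro _
      left
      rw [hmu, hmw]
      exact run_minima_dec hA h hneu hnew
  · have hbe : blk (toPart p) u = blk (toPart p) w := by
      rw [blk_toPart, blk_toPart, h]
    have hme : mval (toPart p) u = mval (toPart p) w :=
      mval_congr (toPart_isPartition p) hbe
    have huw : p.symm u < p.symm w ↔ u < w := by
      have := run_lt_iff p (i := p.symm u) (j := p.symm w) h
      simpa using this
    constructor
    · rintro (hlt | ⟨-, hlt⟩)
      · rw [hme] at hlt; exact absurd hlt (lt_irrefl _)
      · exact huw.mpr hlt
    · intro hlt
      exact Or.inr ⟨hme, huw.mp hlt⟩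
  · constructor
    · rintro (hlt | ⟨he, -⟩)
      · exfalso
        rw [hmu, hmw] at hlt
        exact lt_asymm hlt (run_minima_dec hA h hnew hneu)
      · exfalso
        have hbe := (mval_eq_iff (toPart_isPartition p)).mp he
        rw [blk_toPart, blk_toPart] at hbe
        exact absurd (fiber_eq_iff hbe) (by omega)
    · intro hlt
      have := pos_lt_of_runIdx_lt p h
      exact absurd hlt (not_lt.mpr (le_of_lt this))

lemma rk_toPart {p : Equiv.Perm (Fin n)} (hA : Avoids132 p) (w : Fin n) :
    rk (toPart p) w = ((p.symm w : Fin n) : ℕ) := by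
  unfold rk
  rw [Finset.filter_congr (fun u _ => by
    rw [show (prec (toPart p) u w ↔ p.symm u < p.symm w) from prec_toPart_iff hA u w])]
  have himg : (Finset.univ.filter fun u => p.symm u < p.symm w) =
      Finset.image p (Finset.univ.filter fun i : Fin n => i < p.symm w) := by
    ext u
    simp only [Finset.mem_filter, Finset.mem_univ, true_and, Finset.mem_image]
    constructor
    · intro h
      exact ⟨p.symm u, h, by simp⟩
    · rintro ⟨i, hi, rfl⟩
      simpa using hi
  rw [himg, Finset.card_image_of_injective _ p.injective]
  have : (Finset.univ.filter fun i : Fin n => i < p.symm w) = Finset.Iio (p.symm w) := by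
    ext i; simp
  rw [this, Fin.card_Iio]

lemma psi_toPart {p : Equiv.Perm (Fin n)} (hA : Avoids132 p) : psi (toPart p) = p := by
  have hsymm : ∀ w, (psi (toPart p)).symm w = p.symm w := by
    intro w
    exact Fin.ext ((psi_symm_apply (toPart p) w).trans (rk_toPart hA w))
  ext i
  have h1 := hsymm (psi (toPart p) i)
  rw [Equiv.symm_apply_apply] at h1
  have h2 := congrArg p h1
  rw [Equiv.apply_symm_apply] at h2
  exact congrArg Fin.val h2.symm

section PsiSide
variable {P : Finset (Finset (Fin n))} (hP : IsPartition P)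

lemma mval_psi_anti (hP : IsPartition P) {i j : Fin n} (hij : i ≤ j) :
    mval P (psi P j) ≤ mval P (psi P i) := by
  rcases eq_or_lt_of_le hij with rfl | h
  · exact le_refl _
  · rcases (lt_iff_prec P i j).mp h with hlt | ⟨he, -⟩
    · exact le_of_lt hlt
    · exact le_of_eq he.symm

/-- Blocks occupy contiguous position intervals. -/
lemma blk_contig (hP : IsPartition P) {i t j : Fin n} (h1 : i ≤ t) (h2 : t ≤ j)
    (hb : blk P (psi P i) = blk P (psi P j)) :
    blk P (psi P t) = blk P (psi P i) := by
  have e1 := mval_psi_anti hP h1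
  have e2 := mval_psi_anti hP h2
  have e3 : mval P (psi P i) = mval P (psi P j) := mval_congr hP hb
  have : mval P (psi P t) = mval P (psi P i) := le_antisymm e1 (by rw [e3]; exact e2)
  exact (mval_eq_iff hP).mp this

lemma not_dsc_of_blk_eq (hP : IsPartition P) {t : ℕ} (htn : t + 1 < n)
    (hb : blk P (psi P ⟨t, by omega⟩) = blk P (psi P ⟨t + 1, htn⟩)) :
    ¬ dsc (psi P) t := by
  rintro ⟨h, hlt⟩
  have hprec : prec P (psi P ⟨t, by omega⟩) (psi P ⟨t + 1, htn⟩) :=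
    (lt_iff_prec P _ _).mp (by simp [Fin.lt_def])
  rcases hprec with hm | ⟨-, hlt'⟩
  · rw [(mval_eq_iff hP).mpr hb] at hm
    exact absurd hm (lt_irrefl _)
  · exact absurd hlt (not_lt.mpr (le_of_lt hlt'))

lemma dsc_of_blk_ne (hP : IsPartition P) {t : ℕ} (htn : t + 1 < n)
    (hb : blk P (psi P ⟨t, by omega⟩) ≠ blk P (psi P ⟨t + 1, htn⟩)) :
    dsc (psi P) t := by
  set p := psi P with hp
  set w := p ⟨t + 1, htn⟩ with hw
  have hmw : mval P w ∈ blk P w := mval_mem hP w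
  -- the entry after a block change is the minimum of its block
  have hmvw : mval P w = w := by
    by_contra hne
    have hlt : mval P w < w := lt_of_le_of_ne (mval_le_self hP w) hne
    have hbm : blk P (mval P w) = blk P w := (mem_blk_iff hP).mp hmw
    have hprec : prec P (mval P w) w := Or.inr ⟨mval_congr hP hbm, hlt⟩
    have hrk : rk P (mval P w) < rk P w := rk_lt_of_prec hprec
    have hrkw : rk P w = t + 1 := by rw [hw, hp, rk_psi]
    set j : Fin n := ⟨rk P (mval P w), by omega⟩ with hj
    have hpj : p j = mval P w := by
      have : rkFun P (mval P w) = j := Fin.ext rfl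
      rw [hp, psi, ← this, Equiv.ofBijective_symm_apply_apply]
    have hcont : blk P (p ⟨t, by omega⟩) = blk P (p j) := by
      have := blk_contig hP (i := j) (t := ⟨t, by omega⟩) (j := ⟨t + 1, htn⟩)
        (by simp [hj, Fin.le_def]; omega) (by simp [Fin.le_def]) (by rw [hpj, hbm])
      rw [this]
    rw [hpj, hbm] at hcont
    exact hb hcont
  -- now p t > p (t+1)
  have hprec : prec P (p ⟨t, by omega⟩) w := (lt_iff_prec P _ _).mp (by simp [Fin.lt_def])
  rcases hprec with hm | ⟨he, -⟩
  · refine ⟨htn, ?_⟩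
    calc p ⟨t + 1, htn⟩ = mval P w := hmvw.symm
    _ < mval P (p ⟨t, by omega⟩) := hm
    _ ≤ p ⟨t, by omega⟩ := mval_le_self hP _
  · exact absurd ((mval_eq_iff hP).mp he) hb

lemma runIdx_eq_of_no_dsc (p : Equiv.Perm (Fin n)) :
    ∀ (d i : ℕ), (∀ t, i ≤ t → t < i + d → ¬ dsc p t) → runIdx p i = runIdx p (i + d) := by
  intro d
  induction d with
  | zero => intro i _; rfl
  | succ d ih =>
    intro i h
    have h1 : runIdx p i = runIdx p (i + d) := ih i (fun t ht1 ht2 => h t ht1 (by omega))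
    have h2 := runIdx_succ p (i + d)
    rw [if_neg (h (i + d) (by omega) (by omega)), show i + d + 1 = i + (d + 1) from rfl] at h2
    omega

lemma exists_blk_change (hP : IsPartition P) :
    ∀ (d : ℕ) (i j : Fin n), (j : ℕ) = (i : ℕ) + d →
      blk P (psi P i) ≠ blk P (psi P j) →
      ∃ t : ℕ, ∃ h : t + 1 < n, (i : ℕ) ≤ t ∧ t + 1 ≤ (j : ℕ) ∧
        blk P (psi P ⟨t, by omega⟩) ≠ blk P (psi P ⟨t + 1, h⟩) := by
  intro d
  induction d with
  | zero =>
    intro i j he hne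
    exact absurd (congrArg (fun x => blk P (psi P x)) (Fin.ext he.symm : i = j)) hne
  | succ d ih =>
    intro i j he hne
    have hjn := j.isLt
    set j' : Fin n := ⟨(i : ℕ) + d, by omega⟩ with hj'
    by_cases hcase : blk P (psi P i) = blk P (psi P j')
    · refine ⟨(i : ℕ) + d, by omega, by omega, by omega, ?_⟩
      intro hcontra
      apply hne
      have e1 : (⟨(i : ℕ) + d, by omega⟩ : Fin n) = j' := rfl
      have e2 : (⟨(i : ℕ) + d + 1, by omega⟩ : Fin n) = j := Fin.ext (by simp only [Fin.val_mk]; omega)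
      rw [e1, e2] at hcontra
      rw [hcase, hcontra]
    · obtain ⟨t, h, ht1, ht2, htb⟩ := ih i j' (by simp [hj']) hcase
      exact ⟨t, h, ht1, by simp [hj'] at ht2; omega, htb⟩

/-- Runs of `psi P` are exactly the blocks of `P`. -/
lemma runIdx_psi_eq_iff (hP : IsPartition P) (i j : Fin n) :
    runIdx (psi P) (i : ℕ) = runIdx (psi P) (j : ℕ) ↔
      blk P (psi P i) = blk P (psi P j) := by
  -- first, the version for i ≤ j
  suffices haux : ∀ i j : Fin n, (i : ℕ) ≤ (j : ℕ) →
      (runIdx (psi P) (i : ℕ) = runIdx (psi P) (j : ℕ) ↔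
        blk P (psi P i) = blk P (psi P j)) by
    rcases le_total (i : ℕ) (j : ℕ) with h | h
    · exact haux i j h
    · rw [eq_comm, eq_comm (a := blk P (psi P i))]
      exact haux j i h
  intro i j hij
  constructor
  · intro hr
    by_contra hne
    obtain ⟨t, h, ht1, ht2, htb⟩ := exists_blk_change hP ((j : ℕ) - (i : ℕ)) i j (by omega) hne
    exact absurd (dsc_of_blk_ne hP h htb) (not_dsc_of_run_eq (psi P) hr ht1 (by omega))
  · intro hb
    have : ∀ t, (i : ℕ) ≤ t → t < (i : ℕ) + ((j : ℕ) - (i : ℕ)) → ¬ dsc (psi P) t := by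
      intro t ht1 ht2
      have htn : t + 1 < n := by have := j.isLt; omega
      apply not_dsc_of_blk_eq hP htn
      have c1 : blk P (psi P ⟨t, by omega⟩) = blk P (psi P i) :=
        blk_contig hP (i := i) (t := ⟨t, by omega⟩) (j := j)
          (by simp [Fin.le_def]; omega) (by simp [Fin.le_def]; omega) hb
      have c2 : blk P (psi P ⟨t + 1, htn⟩) = blk P (psi P i) :=
        blk_contig hP (i := i) (t := ⟨t + 1, htn⟩) (j := j)
          (by simp [Fin.le_def]; omega) (by simp [Fin.le_def]; omega) hb
      rw [c1, c2]
    have := runIdx_eq_of_no_dsc (psi P) ((j : ℕ) - (i : ℕ)) (i : ℕ) this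
    rw [show (i : ℕ) + ((j : ℕ) - (i : ℕ)) = (j : ℕ) from by omega] at this
    exact this

end PsiSide

lemma psi_avoids {P : Finset (Finset (Fin n))} (hP : IsPartition P)
    (hNC : IsNoncrossing P) : Avoids132 (psi P) := by
  rintro ⟨i, j, k, hij, hjk, h1, h2⟩
  set p := psi P with hp
  -- blocks of p j and p k differ
  have hbjk : blk P (p j) ≠ blk P (p k) := by
    intro hb
    have hr : runIdx p (j : ℕ) = runIdx p (k : ℕ) := (runIdx_psi_eq_iff hP j k).mpr hb
    exact absurd (run_lt p hjk hr) (not_lt.mpr (le_of_lt h2))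
  have hmjk : mval P (p k) < mval P (p j) := by
    rcases (lt_iff_prec P j k).mp hjk with hm | ⟨he, -⟩
    · exact hm
    · exact absurd ((mval_eq_iff hP).mp he) hbjk
  by_cases hbij : blk P (p i) = blk P (p j)
  · -- p i, p j in B₂' ; mval (p k), p k in B₁'
    refine hNC ⟨mval P (p k), p i, p k, p j, ?_, h1, h2,
      blk P (p k), (blk_mem hP _).1, blk P (p i), (blk_mem hP _).1, ?_, mval_mem hP _,
      (blk_mem hP _).2, (blk_mem hP _).2, ?_⟩
    · calc mval P (p k) < mval P (p j) := hmjk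
      _ = mval P (p i) := (mval_congr hP hbij.symm)
      _ ≤ p i := mval_le_self hP _
    · rw [hbij]; exact fun h => hbjk h.symm
    · rw [hbij]; exact (blk_mem hP _).2
  · have hmij : mval P (p j) < mval P (p i) := by
      rcases (lt_iff_prec P i j).mp hij with hm | ⟨he, -⟩
      · exact hm
      · exact absurd ((mval_eq_iff hP).mp he) hbij
    refine hNC ⟨mval P (p k), mval P (p j), p k, p j, hmjk, ?_, h2,
      blk P (p k), (blk_mem hP _).1, blk P (p j), (blk_mem hP _).1,
      fun h => hbjk h.symm, mval_mem hP _, (blk_mem hP _).2, mval_mem hP _,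
      (blk_mem hP _).2⟩
    calc mval P (p j) < mval P (p i) := hmij
    _ ≤ p i := mval_le_self hP _
    _ < p k := h1

lemma toPart_psi {P : Finset (Finset (Fin n))} (hP : IsPartition P) :
    toPart (psi P) = P := by
  set p := psi P with hp
  have hfib : ∀ u : Fin n, fiber p (runIdx p ((p.symm u : Fin n) : ℕ)) = blk P u := by
    intro u
    ext w
    rw [mem_fiber]
    have := runIdx_psi_eq_iff hP (p.symm w) (p.symm u)
    rw [Equiv.apply_symm_apply, Equiv.apply_symm_apply] at this
    rw [this, mem_blk_iff hP]
  ext B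
  rw [mem_toPart]
  constructor
  · rintro ⟨i, rfl⟩
    have : fiber p (runIdx p (i : ℕ)) = blk P (p i) := by
      have := hfib (p i)
      rwa [Equiv.symm_apply_apply] at this
    rw [this]
    exact (blk_mem hP _).1
  · intro hB
    obtain ⟨u, hu⟩ := hP.1 B hB
    exact ⟨p.symm u, by rw [hfib u]; exact blk_eq hP hB hu⟩

end Stmt2

/-- For `0 ≤ k ≤ n-1`, the number of 132-avoiding permutations of `[n]`
with exactly `k` descents equals the number of noncrossing partitions of `[n]` with exactly
`k+1` blocks. -/

theorem stmt_2 (n k : ℕ) (hn : 0 < n) (hk : k ≤ n - 1) :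
    Nat.card {p : Equiv.Perm (Fin n) // Avoids132 p ∧ (DescentSet p).card = k} =
    Nat.card {P : Finset (Finset (Fin n)) //
      IsPartition P ∧ IsNoncrossing P ∧ P.card = k + 1} := by
  apply Nat.card_congr
  exact {
    toFun := fun x => ⟨Stmt2.toPart x.1,
      Stmt2.toPart_isPartition x.1,
      Stmt2.toPart_noncrossing x.1 x.2.1,
      by rw [Stmt2.toPart_card x.1 hn, ← Stmt2.descentSet_card, x.2.2]⟩
    invFun := fun y => ⟨Stmt2.psi y.1,
      Stmt2.psi_avoids y.2.1 y.2.2.1,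
      by
        have h1 := Stmt2.toPart_card (Stmt2.psi y.1) hn
        rw [Stmt2.toPart_psi y.2.1, y.2.2.2] at h1
        rw [Stmt2.descentSet_card]
        omega⟩
    left_inv := fun x => Subtype.ext (Stmt2.psi_toPart x.2.1)
    right_inv := fun y => Subtype.ext (Stmt2.toPart_psi y.2.1) }
end

section
/- For every positive integer n and every integer k with 0 ≤ k ≤ n-1, the number of 132-avoiding permutations of [n] having exactly k descents equals (1/n)·C(n,k)·C(n,k+1), where C(a,b) denotes the binomial coefficient. -/
/-
The Lehmer code `c i = #{j > i | p j < p i}` is a bijection from permutations of `[n]` onto the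
staircase sequences `c i < n - i`. A descent of `p` is exactly a strict drop of `c`, and `p` avoids
132 exactly when `c` is antitone: a 132 pattern can be slid to one whose first two positions are
adjacent, and across such a pair the code increases. So one counts antitone staircase sequences by
their number of drops. Deleting the first entry gives a recursion in the length once the first entry
is bounded by a parameter `b`, and the number of such sequences of length `m + 1` with `k + 1` drops
and first entry at most `b` is `C(b, k+1) C(m, k+1) - C(b, k+2) C(m, k)`. At `b = m` this is the
Narayana number `C(m+1, k+1) C(m+1, k+2) / (m+1)`.
-/

open Finset
open scoped Nat

section LehmerCode

variable {α : Type*} [LinearOrder α]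

def lehmerCode {n : ℕ} (f : Fin n → α) (i : Fin n) : ℕ := #{j | i < j ∧ f j < f i}

lemma lehmerCode_lt {n : ℕ} (f : Fin n → α) (i : Fin n) : lehmerCode f i < n - i := by
  have h : lehmerCode f i ≤ #(Ioi i) :=
    card_le_card fun j hj => by simpa using (mem_filter.1 hj).2.1
  have := i.isLt
  rw [Fin.card_Ioi] at h
  omega

section Adjacent

variable {m : ℕ} (f : Fin (m + 1) → α) (i : Fin m)

lemma lehmerCode_succ_lt_of_lt (h : f i.succ < f i.castSucc) :
    lehmerCode f i.succ < lehmerCode f i.castSucc := by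
  refine card_lt_card ⟨fun j hj => ?_, fun hsub => ?_⟩
  · simp only [mem_filter, mem_univ, true_and] at hj ⊢
    exact ⟨Fin.castSucc_lt_succ.trans hj.1, hj.2.trans h⟩
  · simpa using hsub (mem_filter.2 ⟨mem_univ _, Fin.castSucc_lt_succ, h⟩)

lemma filter_castSucc_subset_filter_succ (h : f i.castSucc ≤ f i.succ) :
    ({j | i.castSucc < j ∧ f j < f i.castSucc} : Finset (Fin (m + 1))) ⊆
      ({j | i.succ < j ∧ f j < f i.succ} : Finset (Fin (m + 1))) := by
  intro j hj
  simp only [mem_filter, mem_univ, true_and] at hj ⊢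
  refine ⟨lt_of_le_of_ne (Fin.castSucc_lt_iff_succ_le.1 hj.1) ?_, hj.2.trans_le h⟩
  rintro rfl
  exact (hj.2.trans_le h).false

lemma lehmerCode_succ_lt_iff :
    lehmerCode f i.succ < lehmerCode f i.castSucc ↔ f i.succ < f i.castSucc :=
  ⟨fun h => not_le.1 fun h' =>
    (card_le_card (filter_castSucc_subset_filter_succ f i h')).not_gt h,
    lehmerCode_succ_lt_of_lt f i⟩

lemma lehmerCode_castSucc_lt_of_pattern {k : Fin (m + 1)} (hk : i.succ < k)
    (h₁ : f i.castSucc < f k) (h₂ : f k < f i.succ) :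
    lehmerCode f i.castSucc < lehmerCode f i.succ := by
  refine card_lt_card ⟨filter_castSucc_subset_filter_succ f i (h₁.trans h₂).le, fun hsub => ?_⟩
  have hk_mem := hsub (mem_filter.2 ⟨mem_univ k, hk, h₂⟩)
  simp only [mem_filter, mem_univ, true_and] at hk_mem
  exact h₁.not_gt hk_mem.2

end Adjacent

lemma exists_adjacent_pattern_of_pattern {m : ℕ} {f : Fin (m + 1) → α}
    (hf : Function.Injective f) {i j k : Fin (m + 1)} (hij : i < j) (hjk : j < k)
    (h₁ : f i < f k) (h₂ : f k < f j) :
    ∃ a : Fin m, a.succ < k ∧ f a.castSucc < f k ∧ f k < f a.succ := by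
  induction j using Fin.induction with
  | zero => exact absurd hij (Fin.not_lt_zero i)
  | succ a ih =>
    rcases lt_or_gt_of_ne (hf.ne (Fin.castSucc_lt_succ.trans hjk).ne : f a.castSucc ≠ f k)
      with h | h
    · exact ⟨a, hjk, h, h₂⟩
    · have hia : i ≠ a.castSucc := by rintro rfl; exact h.not_gt h₁
      exact ih (lt_of_le_of_ne (Fin.le_castSucc_iff.2 hij) hia)
        (Fin.castSucc_lt_succ.trans hjk) h

end LehmerCode

lemma avoids132_iff_antitone_lehmerCode {m : ℕ} (p : Equiv.Perm (Fin (m + 1))) :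
    Avoids132 p ↔ Antitone (lehmerCode p) := by
  rw [Fin.antitone_iff_succ_le]
  constructor
  · intro hp i
    rcases lt_or_ge (p i.succ) (p i.castSucc) with h | h
    · exact (lehmerCode_succ_lt_of_lt p i h).le
    · refine card_le_card fun j hj => ?_
      simp only [mem_filter, mem_univ, true_and] at hj ⊢
      refine ⟨Fin.castSucc_lt_succ.trans hj.1, not_le.1 fun hj' => hp ?_⟩
      have hne : p i.castSucc ≠ p j := p.injective.ne (Fin.castSucc_lt_succ.trans hj.1).ne
      exact ⟨i.castSucc, i.succ, j, Fin.castSucc_lt_succ, hj.1, lt_of_le_of_ne hj' hne, hj.2⟩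
  · rintro hanti ⟨i, j, k, hij, hjk, h₁, h₂⟩
    obtain ⟨a, hak, ha₁, ha₂⟩ := exists_adjacent_pattern_of_pattern p.injective hij hjk h₁ h₂
    exact (hanti a).not_gt (lehmerCode_castSucc_lt_of_pattern p a hak ha₁ ha₂)

lemma strictMonoOn_card_filter_lt {α : Type*} [LinearOrder α] (s : Finset α) :
    StrictMonoOn (fun a => #{v ∈ s | v < a}) s := by
  intro a ha b _ hab
  refine card_lt_card ⟨fun v hv => ?_, fun hsub => ?_⟩
  · simp only [mem_filter] at hv ⊢
    exact ⟨hv.1, hv.2.trans hab⟩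
  · exact (mem_filter.1 (hsub (mem_filter.2 ⟨ha, hab⟩))).2.false

-- So `p i` is determined by `lehmerCode p i` and the values of `p` before `i`.
lemma lehmerCode_eq_card_filter_lt {n : ℕ} (p : Equiv.Perm (Fin n)) (i : Fin n) :
    lehmerCode p i = #{v ∈ univ \ (Iio i).image p | v < p i} := by
  refine card_nbij' p p.symm (fun j hj => ?_) (fun v hv => ?_) (fun j _ => p.symm_apply_apply j)
    (fun v _ => p.apply_symm_apply v)
  · simp only [coe_filter, mem_univ, true_and, Set.mem_ofPred_eq] at hj
    simp only [coe_filter, mem_sdiff, mem_univ, mem_image, mem_Iio, true_and, Set.mem_ofPred_eq,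
      not_exists, not_and]
    exact ⟨fun j' hj' he => (hj'.trans hj.1).ne (p.injective he), hj.2⟩
  · simp only [coe_filter, mem_sdiff, mem_univ, mem_image, mem_Iio, true_and, Set.mem_ofPred_eq,
      not_exists, not_and] at hv
    simp only [coe_filter, mem_univ, true_and, Set.mem_ofPred_eq, Equiv.apply_symm_apply]
    refine ⟨lt_of_le_of_ne (not_lt.1 fun h => hv.1 _ h (p.apply_symm_apply v)) ?_, hv.2⟩
    rintro rfl
    simp at hv

lemma lehmerCode_injective {n : ℕ} :
    Function.Injective fun p : Equiv.Perm (Fin n) => lehmerCode p := by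
  intro p q h
  refine Equiv.ext fun i => ?_
  induction i using WellFoundedLT.induction with
  | _ i ih =>
    have hused : (Iio i).image p = (Iio i).image q :=
      image_congr fun j hj => ih j (by simpa using hj)
    have hp : p i ∈ univ \ (Iio i).image p := by simp [p.injective.eq_iff]
    have hq : q i ∈ univ \ (Iio i).image p := by simp [hused, q.injective.eq_iff]
    refine (strictMonoOn_card_filter_lt _).injOn hp hq ?_
    simpa [lehmerCode_eq_card_filter_lt, hused] using congrFun h i

def staircase (n : ℕ) : Finset (Fin n → ℕ) := Fintype.piFinset fun i => range (n - i)

lemma card_staircase (n : ℕ) : #(staircase n) = n ! := by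
  rw [staircase, Fintype.card_piFinset]
  simp only [card_range]
  rw [Fin.prod_univ_eq_prod_range (fun i => n - i), ← prod_range_add_one_eq_factorial,
    ← prod_range_reflect]
  exact prod_congr rfl fun i hi => by simp at hi; omega

lemma apply_zero_lt_of_mem_staircase {n : ℕ} {c : Fin (n + 1) → ℕ} (hc : c ∈ staircase (n + 1)) :
    c 0 < n + 1 := by
  simpa using Fintype.mem_piFinset.1 hc 0

lemma cons_mem_staircase_iff {n a : ℕ} {t : Fin n → ℕ} :
    (Fin.cons a t : Fin (n + 1) → ℕ) ∈ staircase (n + 1) ↔ a < n + 1 ∧ t ∈ staircase n := by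
  simp [staircase, Fin.forall_fin_succ]

lemma card_filter_staircase_succ (n : ℕ) (P : (Fin (n + 1) → ℕ) → Prop) [DecidablePred P] :
    #{c ∈ staircase (n + 1) | P c} =
      ∑ a ∈ range (n + 1), #{t ∈ staircase n | P (Fin.cons a t)} := by
  rw [← card_sigma]
  refine card_nbij' (fun c => ⟨c 0, Fin.tail c⟩) (fun x => Fin.cons x.1 x.2) ?_ ?_ ?_ ?_
  · intro c hc
    rw [mem_coe, mem_filter, ← Fin.cons_self_tail c, cons_mem_staircase_iff] at hc
    simpa [and_assoc] using hc
  · rintro ⟨a, t⟩ h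
    simp_all [cons_mem_staircase_iff]
  · intro c _
    simp
  · rintro ⟨a, t⟩ _
    simp

lemma image_lehmerCode (n : ℕ) :
    univ.image (fun p : Equiv.Perm (Fin n) => lehmerCode p) = staircase n := by
  refine eq_of_subset_of_card_le (image_subset_iff.2 fun p _ =>
    Fintype.mem_piFinset.2 fun i => mem_range.2 (lehmerCode_lt p i)) ?_
  rw [card_staircase, card_image_of_injective _ lehmerCode_injective, Finset.card_univ,
    Fintype.card_perm, Fintype.card_fin]

section DescentCount

variable {α : Type*} [LinearOrder α] {m : ℕ}

def descentCount (f : Fin (m + 1) → α) : ℕ := #{i : Fin m | f i.succ < f i.castSucc}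

lemma descentCount_cons (a : α) (t : Fin (m + 1) → α) :
    descentCount (Fin.cons a t : Fin (m + 2) → α) =
      (if t 0 < a then 1 else 0) + descentCount t := by
  simp only [descentCount, card_filter, Fin.sum_univ_succ]
  simp only [Fin.succ_zero_eq_one, Fin.cons_one, Fin.castSucc_zero, Fin.cons_zero, Fin.cons_succ,
    Fin.castSucc_succ, sum_boole, Nat.cast_id]

lemma descentCount_eq_zero_iff (f : Fin (m + 1) → α) : descentCount f = 0 ↔ Monotone f := by
  simp [descentCount, filter_eq_empty_iff, Fin.monotone_iff_le_succ]

lemma descentCount_lehmerCode (f : Fin (m + 1) → α) :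
    descentCount (lehmerCode f) = descentCount f :=
  congrArg card (filter_congr fun i _ => lehmerCode_succ_lt_iff f i)

end DescentCount

lemma card_descentSet {m : ℕ} (p : Equiv.Perm (Fin (m + 1))) :
    #(DescentSet p) = descentCount p := by
  symm
  refine card_bij (fun i _ => i.val + 1) (fun i hi => ?_)
    (fun i _ j _ h => Fin.ext (by simpa using h)) (fun j hj => ?_)
  · simp only [mem_filter, mem_univ, true_and] at hi
    simp only [DescentSet, mem_filter, mem_range]
    exact ⟨by omega, ⟨by omega, by omega⟩, hi⟩
  · simp only [DescentSet, mem_filter, mem_range] at hj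
    obtain ⟨-, ⟨hj₁, hj₂⟩, hdesc⟩ := hj
    refine ⟨⟨j - 1, by omega⟩, ?_, by simp; omega⟩
    simp only [mem_filter, mem_univ, true_and]
    have hsucc : (⟨j - 1, by omega⟩ : Fin m).succ = ⟨j, hj₂⟩ := Fin.ext (by simp; omega)
    rwa [hsucc]

def antitoneCodes (m k : ℕ) : Finset (Fin (m + 1) → ℕ) :=
  {c ∈ staircase (m + 1) | Antitone c ∧ descentCount c = k}

lemma card_avoids132_descents (m k : ℕ) :
    Nat.card {p : Equiv.Perm (Fin (m + 1)) // Avoids132 p ∧ #(DescentSet p) = k} =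
      #(antitoneCodes m k) := by
  classical
  rw [Nat.card_eq_fintype_card, Fintype.card_subtype, antitoneCodes, ← image_lehmerCode,
    filter_image, card_image_of_injective _ lehmerCode_injective]
  simp_rw [avoids132_iff_antitone_lehmerCode, card_descentSet, descentCount_lehmerCode]

lemma antitoneCodes_zero_right (m : ℕ) : antitoneCodes m 0 = {0} := by
  ext c
  simp only [antitoneCodes, mem_filter, mem_singleton, descentCount_eq_zero_iff]
  constructor
  · rintro ⟨hc, -, hmono⟩
    have hlast : c (Fin.last m) = 0 := by
      simpa using Fintype.mem_piFinset.1 hc (Fin.last m)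
    exact funext fun i => Nat.eq_zero_of_le_zero (hlast ▸ hmono (Fin.le_last i))
  · rintro rfl
    exact ⟨Fintype.mem_piFinset.2 fun i => by simp; omega, antitone_const, monotone_const⟩

lemma antitoneCodes_zero_succ (k : ℕ) : antitoneCodes 0 (k + 1) = ∅ := by
  simp [antitoneCodes, descentCount]

lemma filter_antitoneCodes_of_le {m k b : ℕ} (hb : m ≤ b) :
    {c ∈ antitoneCodes m k | c 0 ≤ b} = antitoneCodes m k :=
  filter_true_of_mem fun _ hc =>
    Nat.le_trans (Nat.lt_succ_iff.1 (apply_zero_lt_of_mem_staircase (mem_filter.1 hc).1)) hb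

lemma card_filter_antitoneCodes_succ_succ {m b : ℕ} (k : ℕ) (hb : b ≤ m + 1) :
    #{c ∈ antitoneCodes (m + 1) (k + 1) | c 0 ≤ b} =
      #{t ∈ antitoneCodes m (k + 1) | t 0 ≤ b} +
        ∑ c ∈ range b, #{t ∈ antitoneCodes m k | t 0 ≤ c} := by
  -- Split the codes `Fin.cons a t` by whether `t 0 < a`, i.e. whether they start with a descent.
  have hsplit (a : ℕ) : #{t ∈ staircase (m + 1) | (Antitone (Fin.cons a t : Fin (m + 2) → ℕ) ∧
      descentCount (Fin.cons a t : Fin (m + 2) → ℕ) = k + 1) ∧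
        (Fin.cons a t : Fin (m + 2) → ℕ) 0 ≤ b} =
      #{t ∈ {t ∈ antitoneCodes m (k + 1) | t 0 ≤ b} | t 0 = a} +
        #{t ∈ antitoneCodes m k | t 0 < a ∧ a ≤ b} := by
    simp only [antitoneCodes, filter_filter]
    rw [← card_union_of_disjoint (disjoint_filter.2 fun t _ h₁ h₂ => by omega), ← filter_or]
    refine congrArg card (filter_congr fun t _ => ?_)
    rw [show Antitone (Fin.cons a t : Fin (m + 2) → ℕ) ↔ t 0 ≤ a ∧ Antitone t from
      antitone_vecCons, descentCount_cons, Fin.cons_zero]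
    by_cases hanti : Antitone t <;> split_ifs <;>
      simp only [hanti, true_and, and_true, false_and, and_false, or_false] <;> omega
  have hfiber : ∑ a ∈ range (m + 2), #{t ∈ {t ∈ antitoneCodes m (k + 1) | t 0 ≤ b} | t 0 = a} =
      #{t ∈ antitoneCodes m (k + 1) | t 0 ≤ b} := by
    refine (card_eq_sum_card_fiberwise fun t ht => ?_).symm
    simp only [antitoneCodes, mem_coe, mem_filter] at ht
    exact mem_range.2 ((apply_zero_lt_of_mem_staircase ht.1.1).trans (Nat.lt_succ_self _))
  have hshift : ∑ a ∈ range (m + 2), #{t ∈ antitoneCodes m k | t 0 < a ∧ a ≤ b} =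
      ∑ c ∈ range b, #{t ∈ antitoneCodes m k | t 0 ≤ c} := by
    rw [sum_range_succ', ← sum_subset (range_subset_range.2 hb) fun _ _ hc => ?_]
    · simp only [Nat.not_lt_zero, false_and, filter_false, card_empty, add_zero]
      refine sum_congr rfl fun c hc => congrArg card (filter_congr fun t _ => ?_)
      simp only [mem_range] at hc
      omega
    · simp only [mem_range] at hc
      simp only [card_eq_zero, filter_eq_empty_iff]
      omega
  rw [antitoneCodes, filter_filter, card_filter_staircase_succ]
  simp_rw [hsplit]
  rw [sum_add_distrib, hfiber, hshift]

lemma sum_range_choose_eq (b i : ℕ) : ∑ c ∈ range b, c.choose i = b.choose (i + 1) := by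
  induction b with
  | zero => simp
  | succ b ih => rw [sum_range_succ, ih, Nat.choose_succ_succ', add_comm]

lemma card_filter_antitoneCodes (m k b : ℕ) (hb : b ≤ m + 1) :
    (#{c ∈ antitoneCodes m (k + 1) | c 0 ≤ b} : ℤ) =
      b.choose (k + 1) * m.choose (k + 1) - b.choose (k + 2) * m.choose k := by
  induction m generalizing k b with
  | zero => interval_cases b <;> simp [antitoneCodes_zero_succ, Nat.choose_eq_zero_of_lt]
  | succ m ih =>
    wlog hb' : b ≤ m + 1 generalizing b
    · obtain rfl : b = m + 2 := by omega
      rw [filter_antitoneCodes_of_le (by omega), ← filter_antitoneCodes_of_le le_rfl,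
        this (m + 1) (by omega) le_rfl]
      push_cast [Nat.choose_succ_succ' (m + 1)]
      ring
    rw [card_filter_antitoneCodes_succ_succ k hb', Nat.cast_add, Nat.cast_sum, ih k b hb']
    cases k with
    | zero =>
      simp only [zero_add, Nat.choose_one_right, Nat.choose_zero_right, Nat.cast_one, mul_one,
        antitoneCodes_zero_right, filter_singleton, Pi.zero_apply, zero_le, ↓reduceIte,
        card_singleton, sum_const, card_range, Int.nsmul_eq_mul, Nat.choose_succ_succ',
        Nat.cast_add]
      ring
    | succ j =>
      have hockey (i : ℕ) : ∑ c ∈ range b, (c.choose i : ℤ) = b.choose (i + 1) := by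
        exact_mod_cast sum_range_choose_eq b i
      rw [sum_congr rfl fun c hc => ih j c (by simp at hc; omega), sum_sub_distrib, ← sum_mul,
        ← sum_mul, hockey, hockey]
      push_cast [Nat.choose_succ_succ' m]
      ring

lemma narayana_identity (m j : ℕ) :
    ((m + 1 : ℕ) : ℤ) * (m.choose (j + 1) * m.choose (j + 1) - m.choose (j + 2) * m.choose j) =
      (m + 1).choose (j + 1) * (m + 1).choose (j + 2) := by
  have e₁ := congrArg (Nat.cast : ℕ → ℤ) (Nat.add_one_mul_choose_eq m j)
  have e₂ := congrArg (Nat.cast : ℕ → ℤ) (Nat.add_one_mul_choose_eq m (j + 1))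
  refine mul_left_cancel₀ (by positivity : ((j : ℤ) + 1) * (j + 2) ≠ 0) ?_
  push_cast [Nat.choose_succ_succ' m] at e₁ e₂ ⊢
  linear_combination ((j + 2) * (m.choose (j + 1) + m.choose (j + 2)) -
    (j + 2) * (m + 1) * m.choose (j + 1) : ℤ) * e₁ + ((j + 2) * (m + 1) * m.choose j : ℤ) * e₂

theorem stmt_3_general (n k : ℕ) (hn : 0 < n) :
    (Nat.card {p : Equiv.Perm (Fin n) // Avoids132 p ∧ (DescentSet p).card = k} : ℚ) =
      (1 / n) * (n.choose k) * (n.choose (k + 1)) := by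
  obtain ⟨m, rfl⟩ := Nat.exists_eq_add_one_of_ne_zero hn.ne'
  rw [card_avoids132_descents]
  cases k with
  | zero =>
    simp only [antitoneCodes_zero_right, card_singleton, Nat.cast_one, Nat.cast_add, one_div,
      Nat.choose_zero_right, mul_one, zero_add, Nat.choose_one_right]
    field_simp
  | succ j =>
    have hcount := card_filter_antitoneCodes m j m (by omega)
    rw [filter_antitoneCodes_of_le le_rfl] at hcount
    have key : #(antitoneCodes m (j + 1)) * (m + 1) =
        (m + 1).choose (j + 1) * (m + 1).choose (j + 2) := by
      have := narayana_identity m j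
      rw [← hcount, mul_comm] at this
      exact_mod_cast this
    field_simp
    exact_mod_cast key

/-- For `0 ≤ k ≤ n-1`, the number of 132-avoiding permutations of `[n]`
with exactly `k` descents equals `(1/n) · C(n,k) · C(n,k+1)` (the Narayana number). -/
theorem stmt_3 (n k : ℕ) (hn : 0 < n) (hk : k ≤ n - 1) :
    (Nat.card {p : Equiv.Perm (Fin n) // Avoids132 p ∧ (DescentSet p).card = k} : ℚ) =
      (1 / n) * (n.choose k) * (n.choose (k + 1)) :=
  stmt_3_general n k hn
end

section
/- For every positive integer n and every subset S ⊆ [n-1], the number of 132-avoiding permutations of [n] with descent set exactly S equals the number of 132-avoiding permutations of [n] with descent set exactly α(S), where α(S) = {i ∈ [n-1] : n-i ∉ S}. -/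
namespace Stmt6

instance avDec {n : ℕ} : DecidablePred (Avoids132 (n := n)) := fun p => by
  unfold Avoids132; infer_instance

/-- counting function -/
def g (m : ℕ) (S : Finset ℕ) : ℕ :=
  (Finset.univ.filter (fun p : Equiv.Perm (Fin m) => Avoids132 p ∧ DescentSet p = S)).card

lemma nat_card_eq (m : ℕ) (S : Finset ℕ) :
    Nat.card {p : Equiv.Perm (Fin m) // Avoids132 p ∧ DescentSet p = S} = g m S := by
  rw [Nat.card_eq_fintype_card, g, Fintype.card_subtype]

lemma mem_descentSet_iff {k : ℕ} (q : Equiv.Perm (Fin k)) {i : ℕ} (h1 : 1 ≤ i) (h2 : i < k) :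
    i ∈ DescentSet q ↔ (q ⟨i, h2⟩ : ℕ) < q ⟨i - 1, by omega⟩ := by
  unfold DescentSet
  rw [Finset.mem_filter]
  constructor
  · rintro ⟨-, h, hlt⟩
    exact hlt
  · intro hlt
    exact ⟨Finset.mem_range.mpr h2, ⟨h1, h2⟩, hlt⟩

lemma mem_descentSet_bound {k : ℕ} (q : Equiv.Perm (Fin k)) {i : ℕ} (h : i ∈ DescentSet q) :
    1 ≤ i ∧ i < k := by
  unfold DescentSet at h
  rw [Finset.mem_filter] at h
  obtain ⟨-, hh, -⟩ := h
  exact hh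

end Stmt6
namespace Stmt6
variable {a b : ℕ}

def glueFun (pA : Equiv.Perm (Fin a)) (pB : Equiv.Perm (Fin b)) :
    Fin (a + b + 1) → Fin (a + b + 1) := fun i =>
  if h : (i : ℕ) < a then ⟨b + (pA ⟨i, h⟩ : ℕ), by have := (pA ⟨i, h⟩).isLt; omega⟩
  else if h2 : (i : ℕ) = a then ⟨a + b, by omega⟩
  else ⟨(pB ⟨(i : ℕ) - a - 1, by have := i.isLt; omega⟩ : ℕ), by
    have := (pB ⟨(i : ℕ) - a - 1, by have := i.isLt; omega⟩).isLt; omega⟩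

lemma glueFun_val_lt (pA : Equiv.Perm (Fin a)) (pB : Equiv.Perm (Fin b))
    {i : Fin (a + b + 1)} (h : (i : ℕ) < a) :
    (glueFun pA pB i : ℕ) = b + (pA ⟨i, h⟩ : ℕ) := by
  rw [glueFun, dif_pos h]

lemma glueFun_val_eq (pA : Equiv.Perm (Fin a)) (pB : Equiv.Perm (Fin b))
    {i : Fin (a + b + 1)} (h : (i : ℕ) = a) :
    (glueFun pA pB i : ℕ) = a + b := by
  rw [glueFun, dif_neg (by omega), dif_pos h]

lemma glueFun_val_gt (pA : Equiv.Perm (Fin a)) (pB : Equiv.Perm (Fin b))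
    {i : Fin (a + b + 1)} (h : a < (i : ℕ)) :
    (glueFun pA pB i : ℕ) = (pB ⟨(i : ℕ) - a - 1, by have := i.isLt; omega⟩ : ℕ) := by
  rw [glueFun, dif_neg (by omega), dif_neg (by omega)]

lemma glueFun_injective (pA : Equiv.Perm (Fin a)) (pB : Equiv.Perm (Fin b)) :
    Function.Injective (glueFun pA pB) := by
  intro i j hij
  have hv : ((glueFun pA pB i : Fin (a+b+1)) : ℕ) = ((glueFun pA pB j : Fin (a+b+1)) : ℕ) :=
    congrArg Fin.val hij
  apply Fin.ext
  have hib := i.isLt; have hjb := j.isLt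
  rcases Nat.lt_trichotomy (i : ℕ) a with hi | hi | hi <;>
    rcases Nat.lt_trichotomy (j : ℕ) a with hj | hj | hj
  · rw [glueFun_val_lt pA pB hi, glueFun_val_lt pA pB hj] at hv
    have : pA ⟨(i : ℕ), hi⟩ = pA ⟨(j : ℕ), hj⟩ := Fin.ext (by omega)
    have := pA.injective this
    rw [Fin.mk.injEq] at this
    exact this
  · rw [glueFun_val_lt pA pB hi, glueFun_val_eq pA pB hj] at hv
    have := (pA ⟨(i : ℕ), hi⟩).isLt; omega
  · rw [glueFun_val_lt pA pB hi, glueFun_val_gt pA pB hj] at hv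
    have := (pB ⟨(j : ℕ) - a - 1, by omega⟩).isLt; omega
  · rw [glueFun_val_eq pA pB hi, glueFun_val_lt pA pB hj] at hv
    have := (pA ⟨(j : ℕ), hj⟩).isLt; omega
  · omega
  · rw [glueFun_val_eq pA pB hi, glueFun_val_gt pA pB hj] at hv
    have := (pB ⟨(j : ℕ) - a - 1, by omega⟩).isLt; omega
  · rw [glueFun_val_gt pA pB hi, glueFun_val_lt pA pB hj] at hv
    have := (pB ⟨(i : ℕ) - a - 1, by omega⟩).isLt; omega
  · rw [glueFun_val_gt pA pB hi, glueFun_val_eq pA pB hj] at hv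
    have := (pB ⟨(i : ℕ) - a - 1, by omega⟩).isLt; omega
  · rw [glueFun_val_gt pA pB hi, glueFun_val_gt pA pB hj] at hv
    have : pB ⟨(i : ℕ) - a - 1, by omega⟩ = pB ⟨(j : ℕ) - a - 1, by omega⟩ := Fin.ext hv
    have := pB.injective this
    rw [Fin.mk.injEq] at this
    omega

noncomputable def glue (pA : Equiv.Perm (Fin a)) (pB : Equiv.Perm (Fin b)) :
    Equiv.Perm (Fin (a + b + 1)) :=
  Equiv.ofBijective (glueFun pA pB)
    (Finite.injective_iff_bijective.mp (glueFun_injective pA pB))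

lemma glue_val_lt (pA : Equiv.Perm (Fin a)) (pB : Equiv.Perm (Fin b))
    {i : Fin (a + b + 1)} (h : (i : ℕ) < a) :
    (glue pA pB i : ℕ) = b + (pA ⟨i, h⟩ : ℕ) := by
  rw [glue, Equiv.ofBijective_apply]; exact glueFun_val_lt pA pB h

lemma glue_val_eq (pA : Equiv.Perm (Fin a)) (pB : Equiv.Perm (Fin b))
    {i : Fin (a + b + 1)} (h : (i : ℕ) = a) :
    (glue pA pB i : ℕ) = a + b := by
  rw [glue, Equiv.ofBijective_apply]; exact glueFun_val_eq pA pB h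

lemma glue_val_gt (pA : Equiv.Perm (Fin a)) (pB : Equiv.Perm (Fin b))
    {i : Fin (a + b + 1)} (h : a < (i : ℕ)) :
    (glue pA pB i : ℕ) = (pB ⟨(i : ℕ) - a - 1, by have := i.isLt; omega⟩ : ℕ) := by
  rw [glue, Equiv.ofBijective_apply]; exact glueFun_val_gt pA pB h

end Stmt6
namespace Stmt6
variable {a b : ℕ}

lemma av_glue (pA : Equiv.Perm (Fin a)) (pB : Equiv.Perm (Fin b))
    (hA : Avoids132 pA) (hB : Avoids132 pB) : Avoids132 (glue pA pB) := by
  rintro ⟨i, j, k, hij, hjk, h1, h2⟩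
  rw [Fin.lt_def] at hij hjk h1 h2
  have hkb := k.isLt
  rcases Nat.lt_trichotomy (j : ℕ) a with hj | hj | hj
  · -- j < a, hence i < a
    have hi : (i : ℕ) < a := by omega
    rcases Nat.lt_trichotomy (k : ℕ) a with hk | hk | hk
    · rw [glue_val_lt pA pB hi, glue_val_lt pA pB hk] at h1
      rw [glue_val_lt pA pB hk, glue_val_lt pA pB hj] at h2
      exact hA ⟨⟨i, hi⟩, ⟨j, hj⟩, ⟨k, hk⟩, Fin.lt_def.mpr (by simpa using hij),
        Fin.lt_def.mpr (by simpa using hjk), Fin.lt_def.mpr (by omega),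
        Fin.lt_def.mpr (by omega)⟩
    · rw [glue_val_eq pA pB hk, glue_val_lt pA pB hj] at h2
      have := (pA ⟨(j : ℕ), hj⟩).isLt; omega
    · rw [glue_val_lt pA pB hi, glue_val_gt pA pB hk] at h1
      have := (pB ⟨(k : ℕ) - a - 1, by omega⟩).isLt; omega
  · -- j = a, so k > a and i < a
    have hi : (i : ℕ) < a := by omega
    have hk : a < (k : ℕ) := by omega
    rw [glue_val_lt pA pB hi, glue_val_gt pA pB hk] at h1
    have := (pB ⟨(k : ℕ) - a - 1, by omega⟩).isLt; omega
  · -- j > a, so k > a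
    have hk : a < (k : ℕ) := by omega
    rcases Nat.lt_trichotomy (i : ℕ) a with hi | hi | hi
    · rw [glue_val_lt pA pB hi, glue_val_gt pA pB hk] at h1
      have := (pB ⟨(k : ℕ) - a - 1, by omega⟩).isLt; omega
    · rw [glue_val_eq pA pB hi, glue_val_gt pA pB hk] at h1
      have := (pB ⟨(k : ℕ) - a - 1, by omega⟩).isLt; omega
    · rw [glue_val_gt pA pB hi, glue_val_gt pA pB hk] at h1
      rw [glue_val_gt pA pB hk, glue_val_gt pA pB hj] at h2
      exact hB ⟨⟨(i : ℕ) - a - 1, by omega⟩, ⟨(j : ℕ) - a - 1, by omega⟩,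
        ⟨(k : ℕ) - a - 1, by omega⟩, Fin.lt_def.mpr (by first | omega | (simp; omega)),
        Fin.lt_def.mpr (by first | omega | (simp; omega)), Fin.lt_def.mpr (by omega),
        Fin.lt_def.mpr (by omega)⟩

lemma descent_glue (pA : Equiv.Perm (Fin a)) (pB : Equiv.Perm (Fin b)) (i : ℕ) :
    i ∈ DescentSet (glue pA pB) ↔
      i ∈ DescentSet pA ∨ (b ≠ 0 ∧ i = a + 1) ∨ (a + 1 < i ∧ i - (a + 1) ∈ DescentSet pB) := by
  by_cases hb : 1 ≤ i ∧ i < a + b + 1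
  · rw [mem_descentSet_iff _ hb.1 hb.2]
    rcases Nat.lt_trichotomy i a with hi | hi | hi
    · -- i < a : both positions in the A-block
      rw [glue_val_lt pA pB (show ((⟨i, hb.2⟩ : Fin (a+b+1)) : ℕ) < a from hi),
        glue_val_lt pA pB (show ((⟨i - 1, by omega⟩ : Fin (a+b+1)) : ℕ) < a by first | omega | (simp; omega))]
      rw [Nat.add_lt_add_iff_left]
      rw [mem_descentSet_iff pA hb.1 hi]
      constructor
      · intro h; exact Or.inl h
      · rintro (h | ⟨-, h⟩ | ⟨h, -⟩)
        · exact h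
        · omega
        · omega
    · -- i = a
      rw [glue_val_eq pA pB (show ((⟨i, hb.2⟩ : Fin (a+b+1)) : ℕ) = a from hi),
        glue_val_lt pA pB (show ((⟨i - 1, by omega⟩ : Fin (a+b+1)) : ℕ) < a by first | omega | (simp; omega))]
      have := (pA ⟨i - 1, by first | omega | (simp; omega)⟩).isLt
      constructor
      · intro h; omega
      · rintro (h | ⟨-, h⟩ | ⟨h, -⟩)
        · have := (mem_descentSet_bound pA h).2; omega
        · omega
        · omega
    · -- i > a
      rcases Nat.lt_trichotomy i (a + 1) with hi2 | hi2 | hi2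
      · omega
      · -- i = a + 1
        rw [glue_val_gt pA pB (show a < ((⟨i, hb.2⟩ : Fin (a+b+1)) : ℕ) from hi),
          glue_val_eq pA pB (show ((⟨i - 1, by omega⟩ : Fin (a+b+1)) : ℕ) = a by first | omega | (simp; omega))]
        have := (pB ⟨i - a - 1, by first | omega | (simp; omega)⟩).isLt
        constructor
        · intro h; exact Or.inr (Or.inl ⟨by omega, hi2⟩)
        · intro h; omega
      · -- i > a + 1 : both positions in the B-block
        rw [glue_val_gt pA pB (show a < ((⟨i, hb.2⟩ : Fin (a+b+1)) : ℕ) from hi),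
          glue_val_gt pA pB (show a < ((⟨i - 1, by omega⟩ : Fin (a+b+1)) : ℕ) by first | omega | (simp; omega))]
        rw [mem_descentSet_iff pB (show 1 ≤ i - (a + 1) by omega) (show i - (a + 1) < b by omega)]
        have e1 : (⟨((⟨i, hb.2⟩ : Fin (a+b+1)) : ℕ) - a - 1, by first | omega | (simp; omega)⟩ : Fin b)
            = ⟨i - (a + 1), by omega⟩ := Fin.ext (by first | omega | (simp; omega))
        have e2 : (⟨((⟨i - 1, by omega⟩ : Fin (a+b+1)) : ℕ) - a - 1, by first | omega | (simp; omega)⟩ : Fin b)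
            = ⟨i - (a + 1) - 1, by omega⟩ := Fin.ext (by first | omega | (simp; omega))
        rw [e1, e2]
        constructor
        · intro h; exact Or.inr (Or.inr ⟨hi2, h⟩)
        · rintro (h | ⟨-, h⟩ | ⟨-, h⟩)
          · have := (mem_descentSet_bound pA h).2; omega
          · omega
          · exact h
  · constructor
    · intro h; exact absurd (mem_descentSet_bound _ h) hb
    · rintro (h | ⟨h, rfl⟩ | ⟨h1, h2⟩)
      · have := mem_descentSet_bound pA h; exact absurd (by omega : 1 ≤ i ∧ i < a+b+1) hb
      · exact absurd (by omega : 1 ≤ a+1 ∧ a+1 < a+b+1) hb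
      · have := mem_descentSet_bound pB h2; exact absurd (by omega : 1 ≤ i ∧ i < a+b+1) hb

end Stmt6
namespace Stmt6
variable {a b : ℕ}

/-- Values after the max position are all below the max-position value chain. -/
lemma bounds_gt (p : Equiv.Perm (Fin (a + b + 1))) (hAv : Avoids132 p)
    (hmax : (p ⟨a, by omega⟩ : ℕ) = a + b) :
    ∀ k : Fin (a + b + 1), a < (k : ℕ) → (p k : ℕ) < b := by
  intro k hk
  have key : ∀ x : Fin (a + b + 1), (x : ℕ) ≤ a → (p k : ℕ) < (p x : ℕ) := by
    intro x hx
    rcases eq_or_lt_of_le hx with hxa | hxa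
    · have hpx : (p x : ℕ) = a + b := by
        rw [show x = (⟨a, by omega⟩ : Fin (a + b + 1)) from Fin.ext hxa]; exact hmax
      have hne : p k ≠ p x := fun h => by
        have := p.injective h
        rw [Fin.ext_iff] at this; omega
      have := (p k).isLt
      rcases Nat.lt_or_ge (p k : ℕ) (a + b) with h | h
      · omega
      · exact absurd (Fin.ext (by omega)) hne
    · by_contra hcon
      push_neg at hcon
      have hne : p x ≠ p k := fun h => by
        have := p.injective h
        rw [Fin.ext_iff] at this; omega
      have hlt : (p x : ℕ) < (p k : ℕ) := by
        rcases Nat.lt_or_ge (p x : ℕ) (p k : ℕ) with h | h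
        · exact h
        · exact absurd (Fin.ext (by omega)) hne
      have hka : (p k : ℕ) < (p ⟨a, by omega⟩ : ℕ) := by
        have hne2 : p k ≠ p ⟨a, by omega⟩ := fun h => by
          have := p.injective h
          rw [Fin.ext_iff] at this; simp at this; omega
        have := (p k).isLt
        rcases Nat.lt_or_ge (p k : ℕ) (a + b) with h | h
        · omega
        · exact absurd (Fin.ext (by omega)) hne2
      exact hAv ⟨x, ⟨a, by omega⟩, k, Fin.lt_def.mpr (by simpa using hxa),
        Fin.lt_def.mpr (by simpa using hk), Fin.lt_def.mpr hlt, Fin.lt_def.mpr hka⟩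
  -- counting
  have hsub : Finset.image p (Finset.Iic ⟨a, by omega⟩) ⊆ Finset.Ioi (p k) := by
    intro y hy
    rw [Finset.mem_image] at hy
    obtain ⟨x, hx, rfl⟩ := hy
    rw [Finset.mem_Iic] at hx
    rw [Finset.mem_Ioi, Fin.lt_def]
    exact key x (Fin.le_def.mp hx)
  have hc := Finset.card_le_card hsub
  rw [Finset.card_image_of_injective _ p.injective, Fin.card_Iic, Fin.card_Ioi] at hc
  simp at hc
  have := (p k).isLt
  omega

lemma bounds_lt (p : Equiv.Perm (Fin (a + b + 1))) (hAv : Avoids132 p)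
    (hmax : (p ⟨a, by omega⟩ : ℕ) = a + b) :
    ∀ i : Fin (a + b + 1), (i : ℕ) < a → b ≤ (p i : ℕ) ∧ (p i : ℕ) < a + b := by
  intro i hi
  constructor
  · have key : ∀ k : Fin (a + b + 1), a < (k : ℕ) → (p k : ℕ) < (p i : ℕ) := by
      intro k hk
      have := bounds_gt p hAv hmax k hk
      by_contra hcon
      push_neg at hcon
      have hne : p i ≠ p k := fun h => by
        have := p.injective h
        rw [Fin.ext_iff] at this; omega
      have hlt : (p i : ℕ) < (p k : ℕ) := by
        rcases Nat.lt_or_ge (p i : ℕ) (p k : ℕ) with h | h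
        · exact h
        · exact absurd (Fin.ext (by omega)) hne
      have hka : (p k : ℕ) < (p ⟨a, by omega⟩ : ℕ) := by
        rw [hmax]; omega
      exact hAv ⟨i, ⟨a, by omega⟩, k, Fin.lt_def.mpr (by simpa using hi),
        Fin.lt_def.mpr (by simpa using hk), Fin.lt_def.mpr hlt, Fin.lt_def.mpr hka⟩
    have hsub : Finset.image p (Finset.Ioi ⟨a, by omega⟩) ⊆ Finset.Iio (p i) := by
      intro y hy
      rw [Finset.mem_image] at hy
      obtain ⟨x, hx, rfl⟩ := hy
      rw [Finset.mem_Ioi] at hx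
      rw [Finset.mem_Iio, Fin.lt_def]
      exact key x (Fin.lt_def.mp hx)
    have hc := Finset.card_le_card hsub
    rw [Finset.card_image_of_injective _ p.injective, Fin.card_Ioi, Fin.card_Iio] at hc
    simp at hc
    omega
  · have hne : p i ≠ p ⟨a, by omega⟩ := fun h => by
      have := p.injective h
      rw [Fin.ext_iff] at this; simp at this; omega
    have := (p i).isLt
    rcases Nat.lt_or_ge (p i : ℕ) (a + b) with h | h
    · exact h
    · exact absurd (Fin.ext (by rw [hmax]; omega)) hne

noncomputable def splitA (p : Equiv.Perm (Fin (a + b + 1)))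
    (h2 : ∀ i : Fin (a + b + 1), (i : ℕ) < a → b ≤ (p i : ℕ) ∧ (p i : ℕ) < a + b) :
    Equiv.Perm (Fin a) :=
  Equiv.ofBijective
    (fun x : Fin a => (⟨(p ⟨(x : ℕ), by have := x.isLt; omega⟩ : ℕ) - b, by
      have := h2 ⟨(x : ℕ), by have := x.isLt; omega⟩ (by simpa using x.isLt)
      omega⟩ : Fin a))
    (Finite.injective_iff_bijective.mp (by
      intro x y hxy
      rw [Fin.mk.injEq] at hxy
      have hx := h2 ⟨(x : ℕ), by have := x.isLt; omega⟩ (by simpa using x.isLt)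
      have hy := h2 ⟨(y : ℕ), by have := y.isLt; omega⟩ (by simpa using y.isLt)
      have : p ⟨(x : ℕ), by have := x.isLt; omega⟩ = p ⟨(y : ℕ), by have := y.isLt; omega⟩ :=
        Fin.ext (by omega)
      have := p.injective this
      rw [Fin.mk.injEq] at this
      exact Fin.ext this))

noncomputable def splitB (p : Equiv.Perm (Fin (a + b + 1)))
    (h3 : ∀ k : Fin (a + b + 1), a < (k : ℕ) → (p k : ℕ) < b) :
    Equiv.Perm (Fin b) :=
  Equiv.ofBijective
    (fun x : Fin b => (⟨(p ⟨a + 1 + (x : ℕ), by have := x.isLt; omega⟩ : ℕ),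
      h3 _ (by simp; omega)⟩ : Fin b))
    (Finite.injective_iff_bijective.mp (by
      intro x y hxy
      rw [Fin.mk.injEq] at hxy
      have : p ⟨a + 1 + (x : ℕ), by have := x.isLt; omega⟩
          = p ⟨a + 1 + (y : ℕ), by have := y.isLt; omega⟩ := Fin.ext hxy
      have := p.injective this
      rw [Fin.mk.injEq] at this
      exact Fin.ext (by omega)))

lemma splitA_val (p : Equiv.Perm (Fin (a + b + 1))) (h2 : _) (x : Fin a) :
    (splitA p h2 x : ℕ) = (p ⟨(x : ℕ), by have := x.isLt; omega⟩ : ℕ) - b := by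
  rw [splitA, Equiv.ofBijective_apply]

lemma splitB_val (p : Equiv.Perm (Fin (a + b + 1))) (h3 : _) (x : Fin b) :
    (splitB p h3 x : ℕ) = (p ⟨a + 1 + (x : ℕ), by have := x.isLt; omega⟩ : ℕ) := by
  rw [splitB, Equiv.ofBijective_apply]

lemma glue_split (p : Equiv.Perm (Fin (a + b + 1))) (h2 : _) (h3 : _)
    (hmax : (p ⟨a, by omega⟩ : ℕ) = a + b) :
    glue (splitA p h2) (splitB p h3) = p := by
  apply Equiv.ext
  intro i
  apply Fin.ext
  have hib := i.isLt
  rcases Nat.lt_trichotomy (i : ℕ) a with hi | hi | hi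
  · rw [glue_val_lt _ _ hi, splitA_val]
    have hb := h2 ⟨(i : ℕ), by omega⟩ hi
    have : (⟨((⟨(i : ℕ), hi⟩ : Fin a) : ℕ), by have := i.isLt; omega⟩ : Fin (a + b + 1)) = i :=
      Fin.ext rfl
    rw [this]
    have := (h2 i hi).1
    omega
  · rw [glue_val_eq _ _ hi]
    have : i = ⟨a, by omega⟩ := Fin.ext hi
    rw [this, hmax]
  · rw [glue_val_gt _ _ hi, splitB_val]
    apply congrArg (fun z : Fin (a + b + 1) => ((p z : Fin (a + b + 1)) : ℕ))
    exact Fin.ext (by simp; omega)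

lemma av_splitA (p : Equiv.Perm (Fin (a + b + 1))) (h2 : _) (hAv : Avoids132 p) :
    Avoids132 (splitA p h2) := by
  rintro ⟨x, y, z, hxy, hyz, h1', h2'⟩
  rw [Fin.lt_def] at hxy hyz h1' h2'
  rw [splitA_val, splitA_val] at h1' h2'
  have bx := (h2 ⟨(x : ℕ), by have := x.isLt; omega⟩ (by simpa using x.isLt))
  have by' := (h2 ⟨(y : ℕ), by have := y.isLt; omega⟩ (by simpa using y.isLt))
  have bz := (h2 ⟨(z : ℕ), by have := z.isLt; omega⟩ (by simpa using z.isLt))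
  exact hAv ⟨⟨(x : ℕ), by have := x.isLt; omega⟩, ⟨(y : ℕ), by have := y.isLt; omega⟩,
    ⟨(z : ℕ), by have := z.isLt; omega⟩, Fin.lt_def.mpr (by simpa using hxy),
    Fin.lt_def.mpr (by simpa using hyz), Fin.lt_def.mpr (by omega), Fin.lt_def.mpr (by omega)⟩

lemma av_splitB (p : Equiv.Perm (Fin (a + b + 1))) (h3 : _) (hAv : Avoids132 p) :
    Avoids132 (splitB p h3) := by
  rintro ⟨x, y, z, hxy, hyz, h1', h2'⟩
  rw [Fin.lt_def] at hxy hyz h1' h2'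
  rw [splitB_val, splitB_val] at h1' h2'
  exact hAv ⟨⟨a + 1 + (x : ℕ), by have := x.isLt; omega⟩, ⟨a + 1 + (y : ℕ), by have := y.isLt; omega⟩,
    ⟨a + 1 + (z : ℕ), by have := z.isLt; omega⟩, Fin.lt_def.mpr (by simp; omega),
    Fin.lt_def.mpr (by simp; omega), Fin.lt_def.mpr (by omega), Fin.lt_def.mpr (by omega)⟩

lemma glue_inj (pA pA' : Equiv.Perm (Fin a)) (pB pB' : Equiv.Perm (Fin b))
    (h : glue pA pB = glue pA' pB') : pA = pA' ∧ pB = pB' := by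
  constructor
  · apply Equiv.ext
    intro x
    have hx : ((⟨(x : ℕ), by have := x.isLt; omega⟩ : Fin (a + b + 1)) : ℕ) < a := by
      simpa using x.isLt
    have h1 := glue_val_lt pA pB hx
    have h2 := glue_val_lt pA' pB' hx
    rw [h] at h1
    apply Fin.ext
    have ex : (⟨((⟨(x : ℕ), by have := x.isLt; omega⟩ : Fin (a + b + 1)) : ℕ), hx⟩ : Fin a) = x :=
      Fin.ext rfl
    rw [ex] at h1 h2
    omega
  · apply Equiv.ext
    intro x
    have hx : a < ((⟨a + 1 + (x : ℕ), by have := x.isLt; omega⟩ : Fin (a + b + 1)) : ℕ) := by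
      simp; omega
    have h1 := glue_val_gt pA pB hx
    have h2 := glue_val_gt pA' pB' hx
    rw [h] at h1
    apply Fin.ext
    have ex : (⟨((⟨a + 1 + (x : ℕ), by have := x.isLt; omega⟩ : Fin (a + b + 1)) : ℕ) - a - 1,
        by have := x.isLt; simp; omega⟩ : Fin b) = x := Fin.ext (by simp; omega)
    rw [ex] at h1 h2
    omega

end Stmt6
namespace Stmt6
variable {a b : ℕ}

def SA (S : Finset ℕ) (a : ℕ) : Finset ℕ := S.filter (fun i => i < a)

def SB (S : Finset ℕ) (a : ℕ) : Finset ℕ :=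
  (S.filter (fun i => a + 1 < i)).image (fun i => i - (a + 1))

def alphaS (m : ℕ) (S : Finset ℕ) : Finset ℕ :=
  (Finset.Icc 1 (m - 1)).filter (fun i => m - i ∉ S)

lemma mem_SA {S : Finset ℕ} {a i : ℕ} : i ∈ SA S a ↔ i ∈ S ∧ i < a := Finset.mem_filter

lemma mem_SB {S : Finset ℕ} {a d : ℕ} : d ∈ SB S a ↔ 1 ≤ d ∧ d + (a + 1) ∈ S := by
  unfold SB
  rw [Finset.mem_image]
  constructor
  · rintro ⟨x, hx, rfl⟩
    rw [Finset.mem_filter] at hx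
    exact ⟨by omega, by rw [show x - (a + 1) + (a + 1) = x by omega]; exact hx.1⟩
  · rintro ⟨h1, h2⟩
    exact ⟨d + (a + 1), Finset.mem_filter.mpr ⟨h2, by omega⟩, by omega⟩

lemma mem_alphaS {m : ℕ} {S : Finset ℕ} {i : ℕ} :
    i ∈ alphaS m S ↔ 1 ≤ i ∧ i ≤ m - 1 ∧ m - i ∉ S := by
  unfold alphaS
  rw [Finset.mem_filter, Finset.mem_Icc, and_assoc]

lemma descent_glue_eq {S : Finset ℕ} (pA : Equiv.Perm (Fin a)) (pB : Equiv.Perm (Fin b))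
    (hside : a ∉ S ∧ (b ≠ 0 → a + 1 ∈ S)) (hS : S ⊆ Finset.Icc 1 (a + b))
    (hA : DescentSet pA = SA S a) (hB : DescentSet pB = SB S a) :
    DescentSet (glue pA pB) = S := by
  ext i
  rw [descent_glue, hA, hB, mem_SA, mem_SB]
  constructor
  · rintro (⟨hiS, -⟩ | ⟨hb, rfl⟩ | ⟨hlt, h1, h2⟩)
    · exact hiS
    · exact hside.2 hb
    · rw [show i - (a + 1) + (a + 1) = i by omega] at h2; exact h2
  · intro hiS
    have hbd := Finset.mem_Icc.mp (hS hiS)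
    rcases Nat.lt_trichotomy i a with h | h | h
    · exact Or.inl ⟨hiS, h⟩
    · rw [h] at hiS; exact absurd hiS hside.1
    · rcases Nat.lt_trichotomy i (a + 1) with h2 | h2 | h2
      · omega
      · exact Or.inr (Or.inl ⟨by omega, h2⟩)
      · exact Or.inr (Or.inr ⟨h2, by omega,
          by rw [show i - (a + 1) + (a + 1) = i by omega]; exact hiS⟩)

lemma descent_glue_inv {S : Finset ℕ} (pA : Equiv.Perm (Fin a)) (pB : Equiv.Perm (Fin b))
    (hD : DescentSet (glue pA pB) = S) :
    (a ∉ S ∧ (b ≠ 0 → a + 1 ∈ S)) ∧ DescentSet pA = SA S a ∧ DescentSet pB = SB S a := by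
  have hchar : ∀ i, i ∈ S ↔ (i ∈ DescentSet pA ∨ (b ≠ 0 ∧ i = a + 1) ∨
      (a + 1 < i ∧ i - (a + 1) ∈ DescentSet pB)) := fun i => by
    rw [← hD]; exact descent_glue pA pB i
  refine ⟨⟨?_, ?_⟩, ?_, ?_⟩
  · intro ha
    rcases (hchar a).mp ha with h | ⟨-, h⟩ | ⟨h, -⟩
    · have := (mem_descentSet_bound _ h).2; omega
    · omega
    · omega
  · intro hb
    exact (hchar (a + 1)).mpr (Or.inr (Or.inl ⟨hb, rfl⟩))
  · ext i
    rw [mem_SA]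
    constructor
    · intro h
      exact ⟨(hchar i).mpr (Or.inl h), (mem_descentSet_bound _ h).2⟩
    · rintro ⟨hiS, hia⟩
      rcases (hchar i).mp hiS with h | ⟨-, h⟩ | ⟨h, -⟩
      · exact h
      · omega
      · omega
  · ext d
    rw [mem_SB]
    constructor
    · intro h
      refine ⟨(mem_descentSet_bound _ h).1, ?_⟩
      exact (hchar (d + (a + 1))).mpr (Or.inr (Or.inr ⟨by
        have := (mem_descentSet_bound _ h).1; omega,
        by rw [show d + (a + 1) - (a + 1) = d by omega]; exact h⟩))
    · rintro ⟨h1, h2⟩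
      rcases (hchar (d + (a + 1))).mp h2 with h | ⟨-, h⟩ | ⟨-, h⟩
      · have := (mem_descentSet_bound _ h).2; omega
      · omega
      · rw [show d + (a + 1) - (a + 1) = d by omega] at h; exact h

lemma fiber_card (S : Finset ℕ) (hS : S ⊆ Finset.Icc 1 (a + b)) :
    (Finset.univ.filter (fun p : Equiv.Perm (Fin (a + b + 1)) =>
        (Avoids132 p ∧ DescentSet p = S) ∧ (p ⟨a, by omega⟩ : ℕ) = a + b)).card
      = if a ∉ S ∧ (b ≠ 0 → a + 1 ∈ S) then g a (SA S a) * g b (SB S a) else 0 := by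
  split_ifs with hside
  · rw [g, g, ← Finset.card_product]
    refine Finset.card_bij'
      (fun p hp =>
        (splitA p (bounds_lt p (Finset.mem_filter.mp hp).2.1.1 (Finset.mem_filter.mp hp).2.2),
         splitB p (bounds_gt p (Finset.mem_filter.mp hp).2.1.1 (Finset.mem_filter.mp hp).2.2)))
      (fun q _ => glue q.1 q.2) ?hi ?hj ?li ?ri
    case hi =>
      intro p hp
      have hp' := (Finset.mem_filter.mp hp).2
      obtain ⟨⟨hAv, hDp⟩, hmax⟩ := hp'
      have h2 := bounds_lt p hAv hmax
      have h3 := bounds_gt p hAv hmax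
      have hg := glue_split p h2 h3 hmax
      have hD' : DescentSet (glue (splitA p h2) (splitB p h3)) = S := by rw [hg]; exact hDp
      obtain ⟨-, hDA, hDB⟩ := descent_glue_inv _ _ hD'
      rw [Finset.mem_product]
      exact ⟨Finset.mem_filter.mpr ⟨Finset.mem_univ _, av_splitA p h2 hAv, hDA⟩,
        Finset.mem_filter.mpr ⟨Finset.mem_univ _, av_splitB p h3 hAv, hDB⟩⟩
    case hj =>
      intro q hq
      rw [Finset.mem_product] at hq
      obtain ⟨hq1, hq2⟩ := hq
      obtain ⟨-, hAv1, hD1⟩ := Finset.mem_filter.mp hq1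
      obtain ⟨-, hAv2, hD2⟩ := Finset.mem_filter.mp hq2
      refine Finset.mem_filter.mpr ⟨Finset.mem_univ _, ⟨av_glue _ _ hAv1 hAv2,
        descent_glue_eq _ _ hside hS hD1 hD2⟩, ?_⟩
      exact glue_val_eq q.1 q.2 rfl
    case li =>
      intro p hp
      have hp' := (Finset.mem_filter.mp hp).2
      exact glue_split p (bounds_lt p hp'.1.1 hp'.2) (bounds_gt p hp'.1.1 hp'.2) hp'.2
    case ri =>
      intro q hq
      rw [Finset.mem_product] at hq
      obtain ⟨hq1, hq2⟩ := hq
      obtain ⟨-, hAv1, hD1⟩ := Finset.mem_filter.mp hq1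
      obtain ⟨-, hAv2, hD2⟩ := Finset.mem_filter.mp hq2
      have hAv : Avoids132 (glue q.1 q.2) := av_glue _ _ hAv1 hAv2
      have hmax : ((glue q.1 q.2) ⟨a, by omega⟩ : ℕ) = a + b := glue_val_eq q.1 q.2 rfl
      have h2 := bounds_lt _ hAv hmax
      have h3 := bounds_gt _ hAv hmax
      have hg := glue_split (glue q.1 q.2) h2 h3 hmax
      have := glue_inj _ _ _ _ hg
      apply Prod.ext
      · exact this.1
      · exact this.2
  · rw [Finset.card_eq_zero, Finset.filter_eq_empty_iff]
    intro p _
    rintro ⟨⟨hAv, hDp⟩, hmax⟩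
    apply hside
    have h2 := bounds_lt p hAv hmax
    have h3 := bounds_gt p hAv hmax
    have hg := glue_split p h2 h3 hmax
    have hD' : DescentSet (glue (splitA p h2) (splitB p h3)) = S := by rw [hg]; exact hDp
    exact (descent_glue_inv _ _ hD').1

end Stmt6
namespace Stmt6
variable {a b : ℕ}

lemma SA_subset {S : Finset ℕ} {a : ℕ} (h1 : ∀ i ∈ S, 1 ≤ i) :
    SA S a ⊆ Finset.Icc 1 (a - 1) := by
  intro i hi
  rw [mem_SA] at hi
  have := h1 i hi.1
  rw [Finset.mem_Icc]
  omega

lemma SB_subset {S : Finset ℕ} (hS : S ⊆ Finset.Icc 1 (a + b)) :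
    SB S a ⊆ Finset.Icc 1 (b - 1) := by
  intro d hd
  rw [mem_SB] at hd
  have := Finset.mem_Icc.mp (hS hd.2)
  rw [Finset.mem_Icc]
  omega

lemma side_symm {S : Finset ℕ} (hS : S ⊆ Finset.Icc 1 (a + b)) :
    (a ∉ S ∧ (b ≠ 0 → a + 1 ∈ S)) ↔
      (b ∉ alphaS (a + b + 1) S ∧ (a ≠ 0 → b + 1 ∈ alphaS (a + b + 1) S)) := by
  have h0 : (0 : ℕ) ∉ S := fun h => by have := Finset.mem_Icc.mp (hS h); omega
  constructor
  · rintro ⟨h1, h2⟩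
    constructor
    · intro hmem
      rw [mem_alphaS] at hmem
      have hb : b ≠ 0 := by omega
      have := h2 hb
      rw [show a + b + 1 - b = a + 1 by omega] at hmem
      exact hmem.2.2 this
    · intro ha
      rw [mem_alphaS]
      refine ⟨by omega, by omega, ?_⟩
      rw [show a + b + 1 - (b + 1) = a by omega]
      exact h1
  · rintro ⟨h1, h2⟩
    constructor
    · intro haS
      rcases Nat.eq_zero_or_pos a with rfl | ha
      · exact h0 haS
      · have := mem_alphaS.mp (h2 (by omega))
        rw [show a + b + 1 - (b + 1) = a by omega] at this
        exact this.2.2 haS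
    · intro hb
      by_contra hc
      apply h1
      rw [mem_alphaS]
      exact ⟨by omega, by omega, by rw [show a + b + 1 - b = a + 1 by omega]; exact hc⟩

lemma alpha_SA {S : Finset ℕ} (hS : S ⊆ Finset.Icc 1 (a + b)) :
    SA (alphaS (a + b + 1) S) b = alphaS b (SB S a) := by
  ext i
  rw [mem_SA, mem_alphaS, mem_alphaS]
  constructor
  · rintro ⟨⟨h1, h2, h3⟩, h4⟩
    refine ⟨h1, by omega, ?_⟩
    intro hcon
    rw [mem_SB] at hcon
    apply h3
    rw [show a + b + 1 - i = b - i + (a + 1) by omega]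
    exact hcon.2
  · rintro ⟨h1, h2, h3⟩
    have hib : i < b := by omega
    refine ⟨⟨h1, by omega, ?_⟩, hib⟩
    intro hcon
    apply h3
    rw [mem_SB]
    exact ⟨by omega, by rw [show b - i + (a + 1) = a + b + 1 - i by omega]; exact hcon⟩

lemma alpha_SB {S : Finset ℕ} (hS : S ⊆ Finset.Icc 1 (a + b)) :
    SB (alphaS (a + b + 1) S) b = alphaS a (SA S a) := by
  ext d
  rw [mem_SB, mem_alphaS, mem_alphaS]
  constructor
  · rintro ⟨h1, g1, g2, g3⟩
    refine ⟨h1, by omega, ?_⟩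
    intro hcon
    rw [mem_SA] at hcon
    apply g3
    rw [show a + b + 1 - (d + (b + 1)) = a - d by omega]
    exact hcon.1
  · rintro ⟨h1, h2, h3⟩
    refine ⟨h1, by omega, by omega, ?_⟩
    intro hcon
    apply h3
    rw [mem_SA]
    constructor
    · rw [show a - d = a + b + 1 - (d + (b + 1)) by omega]
      exact hcon
    · omega

lemma maxpos_iff (p : Equiv.Perm (Fin (a + b + 1))) :
    ((p.symm ⟨a + b, by omega⟩ : Fin (a + b + 1)) : ℕ) = a ↔
      (p ⟨a, by omega⟩ : ℕ) = a + b := by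
  constructor
  · intro h
    have h1 : p.symm ⟨a + b, by omega⟩ = ⟨a, by omega⟩ := Fin.ext h
    have h2 := congrArg p h1
    rw [Equiv.apply_symm_apply] at h2
    rw [← h2]
  · intro h
    have h1 : p ⟨a, by omega⟩ = ⟨a + b, by omega⟩ := Fin.ext h
    have h2 := congrArg p.symm h1
    rw [Equiv.symm_apply_apply] at h2
    rw [← h2]

lemma fiber_card' (m aa : ℕ) (ha : aa < m) (S : Finset ℕ) (hS : S ⊆ Finset.Icc 1 (m - 1)) :
    (Finset.univ.filter (fun p : Equiv.Perm (Fin m) =>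
        (Avoids132 p ∧ DescentSet p = S) ∧
          ((p.symm ⟨m - 1, by omega⟩ : Fin m) : ℕ) = aa)).card
      = if aa ∉ S ∧ (m - 1 - aa ≠ 0 → aa + 1 ∈ S) then
          g aa (SA S aa) * g (m - 1 - aa) (SB S aa) else 0 := by
  obtain ⟨b, rfl⟩ : ∃ b, m = aa + b + 1 := ⟨m - 1 - aa, by omega⟩
  rw [show aa + b + 1 - 1 - aa = b by omega]
  have hS' : S ⊆ Finset.Icc 1 (aa + b) := by simpa using hS
  show (Finset.univ.filter (fun p : Equiv.Perm (Fin (aa + b + 1)) =>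
      (Avoids132 p ∧ DescentSet p = S) ∧
        ((p.symm ⟨aa + b, by omega⟩ : Fin (aa + b + 1)) : ℕ) = aa)).card = _
  rw [Finset.filter_congr (fun p _ => and_congr_right (fun _ => maxpos_iff p))]
  exact fiber_card S hS'

lemma master : ∀ m : ℕ, ∀ S : Finset ℕ, S ⊆ Finset.Icc 1 (m - 1) → g m S = g m (alphaS m S) := by
  intro m
  induction m using Nat.strong_induction_on with
  | _ m IH =>
  intro S hS
  rcases Nat.eq_zero_or_pos m with rfl | hm
  · have hSe : S = ∅ := by
      rw [Finset.eq_empty_iff_forall_notMem]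
      intro x hx
      have := Finset.mem_Icc.mp (hS hx)
      omega
    subst hSe
    have halpha : alphaS 0 (∅ : Finset ℕ) = ∅ := by
      rw [Finset.eq_empty_iff_forall_notMem]
      intro x hx
      rw [mem_alphaS] at hx
      omega
    rw [halpha]
  · have expand : ∀ T : Finset ℕ,
        g m T = ∑ a ∈ Finset.range m, (Finset.univ.filter
          (fun p : Equiv.Perm (Fin m) =>
            (Avoids132 p ∧ DescentSet p = T) ∧
              ((p.symm ⟨m - 1, by omega⟩ : Fin m) : ℕ) = a)).card := by
      intro T
      rw [g, Finset.card_eq_sum_card_fiberwise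
        (f := fun p : Equiv.Perm (Fin m) => ((p.symm ⟨m - 1, by omega⟩ : Fin m) : ℕ))
        (t := Finset.range m) (fun p _ => Finset.mem_range.mpr (Fin.isLt _))]
      exact Finset.sum_congr rfl (fun a _ => by rw [Finset.filter_filter])
    rw [expand S, expand (alphaS m S)]
    conv_rhs => rw [← Finset.sum_range_reflect]
    apply Finset.sum_congr rfl
    intro a ha
    rw [Finset.mem_range] at ha
    have halpha_sub : alphaS m S ⊆ Finset.Icc 1 (m - 1) := Finset.filter_subset _ _
    rw [fiber_card' m a ha S hS, fiber_card' m (m - 1 - a) (by omega) (alphaS m S) halpha_sub]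
    obtain ⟨b, rfl⟩ : ∃ b, m = a + b + 1 := ⟨m - 1 - a, by omega⟩
    have hS' : S ⊆ Finset.Icc 1 (a + b) := by simpa using hS
    rw [show a + b + 1 - 1 - a = b by omega]
    rw [show a + b + 1 - 1 - b = a by omega]
    rw [alpha_SA hS', alpha_SB hS']
    by_cases hc : a ∉ S ∧ (b ≠ 0 → a + 1 ∈ S)
    · rw [if_pos hc, if_pos ((side_symm hS').mp hc)]
      rw [IH a (by omega) (SA S a) (SA_subset (fun i hi => (Finset.mem_Icc.mp (hS' hi)).1)),
        IH b (by omega) (SB S a) (SB_subset hS')]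
      exact Nat.mul_comm _ _
    · rw [if_neg hc, if_neg (fun hcon => hc ((side_symm hS').mpr hcon))]

end Stmt6

/-- For `S ⊆ [n-1]`, the number of 132-avoiding permutations of `[n]` with
descent set exactly `S` equals the number with descent set exactly
`α(S) = {i ∈ [n-1] : n - i ∉ S}`. -/
theorem stmt_6 (n : ℕ) (hn : 0 < n) (S : Finset ℕ) (hS : S ⊆ Finset.Icc 1 (n - 1)) :
    Nat.card {p : Equiv.Perm (Fin n) // Avoids132 p ∧ DescentSet p = S} =
    Nat.card {p : Equiv.Perm (Fin n) // Avoids132 p ∧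
      DescentSet p = (Finset.Icc 1 (n - 1)).filter (fun i => n - i ∉ S)} := by
  rw [Stmt6.nat_card_eq, Stmt6.nat_card_eq]
  exact Stmt6.master n S hS
end
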